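/- arXiv:0808.2749 — 10 statements merged into one kernel-verified Lean document; each statement's English description precedes it below -/
import Mathlib

section
/- Let a ≥ 1 be an integer and let ζ ∈ ℂ be a primitive a-th root of unity. Let σ be the ℂ-algebra automorphism of the polynomial ring ℂ[X,Y] determined by σ(X) = ζ·X and σ(Y) = ζ·Y. Then the fixed subalgebra {f ∈ ℂ[X,Y] : σ(f) = f} equals the ℂ-linear span of the monomials X^i·Y^j with a dividing i + j, and it is generated as a ℂ-algebra by the a+1 monomials X^i·Y^{a−i} for 0 ≤ i ≤ a. -/
/-!
An algebra map scaling every variable by `ζ` multiplies the coefficient of the monomial `X^d` by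
`ζ ^ |d|`, so, `ζ` being a primitive `a`-th root of unity, a polynomial is fixed exactly when every
monomial of its support has total degree divisible by `a`. A monomial `X^i Y^j` of degree `a k`
is a product of `k` generators `X^i' Y^(a-i')`: split off `X^a` if `i ≥ a`, and `X^i Y^(a-i)`
otherwise.
-/

namespace MvPolynomial

section Scaling

variable {ι R : Type*} [CommSemiring R] {φ : MvPolynomial ι R →ₐ[R] MvPolynomial ι R} {c : R}

theorem map_monomial_of_map_X_eq_C_mul_X (hφ : ∀ i, φ (X i) = C c * X i) (d : ι →₀ ℕ) (r : R) :
    φ (monomial d r) = monomial d (c ^ d.degree * r) := by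
  have hC : ∀ s, φ (C s) = C s := φ.commutes
  rw [monomial_eq, monomial_eq, map_mul, hC, map_finsuppProd]
  simp only [map_pow, hφ, mul_pow, Finsupp.prod_mul]
  rw [Finsupp.prod, Finsupp.prod, Finset.prod_pow_eq_pow_sum, ← Finsupp.degree_apply, C_mul,
    C_pow]
  ring

theorem coeff_map_of_map_X_eq_C_mul_X (hφ : ∀ i, φ (X i) = C c * X i)
    (f : MvPolynomial ι R) (d : ι →₀ ℕ) : coeff d (φ f) = c ^ d.degree * coeff d f := by
  classical
  induction f using MvPolynomial.induction_on' with
  | monomial e r =>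
    rw [map_monomial_of_map_X_eq_C_mul_X hφ, coeff_monomial, coeff_monomial]
    split_ifs with h
    · rw [h]
    · rw [mul_zero]
  | add p q hp hq => rw [map_add, coeff_add, coeff_add, hp, hq, mul_add]

end Scaling

section FixedPoints

variable {ι R : Type*} [CommRing R] [IsDomain R] {φ : MvPolynomial ι R →ₐ[R] MvPolynomial ι R}
  {ζ : R} {a : ℕ}

theorem map_eq_self_iff_of_map_X_eq_C_mul_X (hζ : IsPrimitiveRoot ζ a)
    (hφ : ∀ i, φ (X i) = C ζ * X i) (f : MvPolynomial ι R) :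
    φ f = f ↔ ∀ d ∈ f.support, a ∣ d.degree := by
  simp only [MvPolynomial.ext_iff, coeff_map_of_map_X_eq_C_mul_X hφ, mul_left_eq_self₀,
    ← hζ.pow_eq_one_iff_dvd, mem_support_iff]
  exact forall_congr' fun d => or_iff_not_imp_right

theorem setOf_map_eq_self_eq_restrictSupport (hζ : IsPrimitiveRoot ζ a)
    (hφ : ∀ i, φ (X i) = C ζ * X i) :
    {f | φ f = f} = ↑(restrictSupport R {d : ι →₀ ℕ | a ∣ d.degree}) := by
  ext f
  exact (map_eq_self_iff_of_map_X_eq_C_mul_X hζ hφ f).trans (mem_restrictSupport_iff R).symm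

end FixedPoints

section TwoVariables

variable {R : Type*} [CommSemiring R]

theorem restrictSupport_dvd_degree_eq_span (a : ℕ) :
    restrictSupport R {d : Fin 2 →₀ ℕ | a ∣ d.degree} =
      Submodule.span R {p | ∃ i j : ℕ, a ∣ i + j ∧ p = X 0 ^ i * X 1 ^ j} := by
  rw [restrictSupport_eq_span]
  congr 1
  ext p
  constructor
  · rintro ⟨d, hd, rfl⟩
    refine ⟨d 0, d 1, by simpa [Finsupp.degree_eq_sum] using hd, ?_⟩
    change monomial d 1 = _
    rw [monomial_eq, Finsupp.prod_fintype _ _ fun _ => pow_zero _, Fin.prod_univ_two, C_1,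
      one_mul]
  · rintro ⟨i, j, hij, rfl⟩
    refine ⟨Finsupp.single 0 i + Finsupp.single 1 j, by simpa using hij, ?_⟩
    rw [X_pow_eq_monomial, X_pow_eq_monomial, monomial_mul, one_mul]

theorem X_zero_pow_mul_X_one_pow_mem_adjoin {a i j : ℕ} (hij : a ∣ i + j) :
    X 0 ^ i * X 1 ^ j ∈
      Algebra.adjoin R {p : MvPolynomial (Fin 2) R | ∃ i ≤ a, p = X 0 ^ i * X 1 ^ (a - i)} := by
  set A := Algebra.adjoin R {p : MvPolynomial (Fin 2) R | ∃ i ≤ a, p = X 0 ^ i * X 1 ^ (a - i)}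
  obtain ⟨k, hk⟩ := hij
  induction k generalizing i j with
  | zero =>
    obtain ⟨rfl, rfl⟩ : i = 0 ∧ j = 0 := by simpa using hk
    rw [pow_zero, pow_zero, mul_one]
    exact A.one_mem
  | succ k ih =>
    rw [Nat.mul_succ] at hk
    by_cases hai : a ≤ i
    · obtain ⟨i', rfl⟩ := Nat.exists_eq_add_of_le hai
      have hsplit : (X 0 ^ (a + i') * X 1 ^ j : MvPolynomial (Fin 2) R) =
          (X 0 ^ a * X 1 ^ (a - a)) * (X 0 ^ i' * X 1 ^ j) := by
        rw [Nat.sub_self, pow_zero, pow_add]; ring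
      rw [hsplit]
      exact A.mul_mem (Algebra.subset_adjoin ⟨a, le_rfl, rfl⟩) (ih (by omega))
    · obtain ⟨m, rfl⟩ := Nat.exists_eq_add_of_le (Nat.le_of_not_le hai)
      obtain ⟨j', rfl⟩ : ∃ j', j = m + j' := Nat.exists_eq_add_of_le (by omega)
      have hsplit : (X 0 ^ i * X 1 ^ (m + j') : MvPolynomial (Fin 2) R) =
          (X 0 ^ i * X 1 ^ (i + m - i)) * (X 0 ^ 0 * X 1 ^ j') := by
        rw [Nat.add_sub_cancel_left, pow_zero, pow_add]; ring
      rw [hsplit]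
      exact A.mul_mem (Algebra.subset_adjoin ⟨i, by omega, rfl⟩) (ih (by omega))

end TwoVariables

end MvPolynomial

open MvPolynomial

theorem stmt_2_general (a : ℕ) (ζ : ℂ) (hζ : IsPrimitiveRoot ζ a)
    (σ : MvPolynomial (Fin 2) ℂ ≃ₐ[ℂ] MvPolynomial (Fin 2) ℂ)
    (hσX : σ (X 0) = C ζ * X 0) (hσY : σ (X 1) = C ζ * X 1) :
    {f : MvPolynomial (Fin 2) ℂ | σ f = f} =
      ↑(Submodule.span ℂ {p : MvPolynomial (Fin 2) ℂ |
          ∃ i j : ℕ, a ∣ (i + j) ∧ p = X 0 ^ i * X 1 ^ j}) ∧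
    {f : MvPolynomial (Fin 2) ℂ | σ f = f} =
      ↑(Algebra.adjoin ℂ {p : MvPolynomial (Fin 2) ℂ |
          ∃ i : ℕ, i ≤ a ∧ p = X 0 ^ i * X 1 ^ (a - i)}) := by
  have hσ : ∀ i, σ.toAlgHom (X i) = C ζ * X i := Fin.forall_fin_two.2 ⟨hσX, hσY⟩
  have hspan : {f | σ f = f} = ↑(Submodule.span ℂ {p : MvPolynomial (Fin 2) ℂ |
      ∃ i j : ℕ, a ∣ (i + j) ∧ p = X 0 ^ i * X 1 ^ j}) := by
    rw [← restrictSupport_dvd_degree_eq_span]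
    exact setOf_map_eq_self_eq_restrictSupport hζ hσ
  refine ⟨hspan, subset_antisymm ?_ ?_⟩
  · rw [hspan, ← Subalgebra.coe_toSubmodule]
    refine SetLike.coe_subset_coe.2 (Submodule.span_le.2 ?_)
    rintro _ ⟨i, j, hij, rfl⟩
    exact X_zero_pow_mul_X_one_pow_mem_adjoin hij
  · refine Algebra.adjoin_le (S := AlgHom.equalizer σ.toAlgHom (AlgHom.id ℂ _)) ?_
    rintro _ ⟨i, hi, rfl⟩
    change _ ∈ {f | σ f = f}
    rw [hspan]
    exact Submodule.subset_span ⟨i, a - i, by rw [Nat.add_sub_cancel' hi], rfl⟩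

/-- For `a ≥ 1` and `ζ` a primitive `a`-th root of unity, the fixed subalgebra of the
diagonal automorphism `X ↦ ζX`, `Y ↦ ζY` of `ℂ[X,Y]` is the ℂ-linear span of the monomials
`X^i Y^j` with `a ∣ i + j`, and is generated as a ℂ-algebra by the `a+1` monomials
`X^i Y^{a-i}`, `0 ≤ i ≤ a`. -/
theorem stmt_2 (a : ℕ) (ha : 1 ≤ a) (ζ : ℂ) (hζ : IsPrimitiveRoot ζ a)
    (σ : MvPolynomial (Fin 2) ℂ ≃ₐ[ℂ] MvPolynomial (Fin 2) ℂ)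
    (hσX : σ (X 0) = C ζ * X 0) (hσY : σ (X 1) = C ζ * X 1) :
    {f : MvPolynomial (Fin 2) ℂ | σ f = f} =
      ↑(Submodule.span ℂ {p : MvPolynomial (Fin 2) ℂ |
          ∃ i j : ℕ, a ∣ (i + j) ∧ p = X 0 ^ i * X 1 ^ j}) ∧
    {f : MvPolynomial (Fin 2) ℂ | σ f = f} =
      ↑(Algebra.adjoin ℂ {p : MvPolynomial (Fin 2) ℂ |
          ∃ i : ℕ, i ≤ a ∧ p = X 0 ^ i * X 1 ^ (a - i)}) :=
  stmt_2_general a ζ hζ σ hσX hσY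
end

section
/- Let n ≥ 1 and let S be an additive submonoid of ℤ^n. An element u of the monoid algebra ℂ[S] (AddMonoidAlgebra ℂ S) is a unit if and only if u = c·z^m for some nonzero c ∈ ℂ and some m ∈ S with −m ∈ S. -/
/-!
Order `ℤⁿ` lexicographically. If `u * v = 1` in `ℂ[S]` and `u` or `v` had two monomials, then
the product of the leading terms and that of the trailing terms would be two different monomials
of `u * v`, each arising in only one way and hence with nonzero coefficient; but `1` has a single
monomial. So `u = c z^m` and `v = d z^m'`, and `u * v = v * u = 1` forces `m + m' = 0`, `c d = 1`.
-/

open Finset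

instance AddSubmonoid.instTwoUniqueSums {G : Type*} [AddMonoid G] [TwoUniqueSums G]
    (S : AddSubmonoid G) : TwoUniqueSums S :=
  .of_injective_addHom S.subtype.toAddHom Subtype.val_injective ‹_›

theorem AddSubmonoid.isAddUnit_iff_neg_mem {G : Type*} [AddGroup G] {S : AddSubmonoid G}
    {m : S} : IsAddUnit m ↔ -(m : G) ∈ S := by
  refine ⟨fun hm ↦ ?_, fun hm ↦ isAddUnit_iff_exists.mpr
    ⟨⟨-m, hm⟩, Subtype.ext (add_neg_cancel _), Subtype.ext (neg_add_cancel _)⟩⟩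
  obtain ⟨k, hmk, -⟩ := isAddUnit_iff_exists.mp hm
  rw [neg_eq_of_add_eq_zero_right (congrArg Subtype.val hmk)]
  exact k.2

namespace AddMonoidAlgebra

variable {R A : Type*} [Semiring R] [NoZeroDivisors R]

theorem one_lt_card_support_mul [Add A] [TwoUniqueSums A] {f g : R[A]}
    (h : 1 < #f.coeff.support * #g.coeff.support) : 1 < #(f * g).coeff.support := by
  obtain ⟨p, hp, q, hq, hpq, hup, huq⟩ := TwoUniqueSums.uniqueAdd_of_one_lt_card h
  rw [mem_product] at hp hq
  have mem_support {x y : A} (hx : x ∈ f.coeff.support) (hy : y ∈ g.coeff.support)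
      (hxy : UniqueAdd f.coeff.support g.coeff.support x y) : x + y ∈ (f * g).coeff.support := by
    rw [Finsupp.mem_support_iff, coeff_mul_add_of_uniqueAdd hxy]
    exact mul_ne_zero (Finsupp.mem_support_iff.mp hx) (Finsupp.mem_support_iff.mp hy)
  refine one_lt_card.mpr ⟨_, mem_support hp.1 hp.2 hup, _, mem_support hq.1 hq.2 huq,
    fun hsum ↦ hpq ?_⟩
  obtain ⟨h₁, h₂⟩ := huq hp.1 hp.2 hsum
  exact Prod.ext h₁ h₂

variable [Nontrivial R]

theorem exists_eq_single_of_mul_eq_one [AddZeroClass A] [TwoUniqueSums A] {u v : R[A]}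
    (h : u * v = 1) : ∃ (a : A) (r : R), u = single a r := by
  have hu : u ≠ 0 := left_ne_zero_of_mul_eq_one h
  have hv : v ≠ 0 := right_ne_zero_of_mul_eq_one h
  have hu_pos : 0 < #u.coeff.support := card_pos.mpr (Finsupp.support_nonempty_iff.mpr (by simpa))
  have hv_pos : 0 < #v.coeff.support := card_pos.mpr (Finsupp.support_nonempty_iff.mpr (by simpa))
  have h_one : #u.coeff.support * #v.coeff.support ≤ 1 := by
    by_contra! hlt
    have := one_lt_card_support_mul hlt
    rw [h, one_def, coeff_single] at this
    exact this.not_ge (Finsupp.card_support_le_one'.mpr ⟨0, 1, rfl⟩)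
  obtain ⟨a, r, -, hr⟩ : ∃ a, ∃ r ≠ 0, u.coeff = .single a r :=
    Finsupp.card_support_eq_one'.mp (by nlinarith)
  exact ⟨a, r, coeff_injective hr⟩

theorem single_mul_single_eq_one_iff [AddZeroClass A] {a b : A} {r s : R} :
    single a r * single b s = 1 ↔ a + b = 0 ∧ r * s = 1 := by
  simp [single_mul_single, one_def, single_inj]

theorem isUnit_iff_exists_single [AddMonoid A] [TwoUniqueSums A] {u : R[A]} :
    IsUnit u ↔ ∃ (r : R) (a : A), IsUnit r ∧ IsAddUnit a ∧ u = single a r := by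
  refine ⟨fun hu ↦ ?_, fun ⟨r, a, hr, ha, hu⟩ ↦ ?_⟩
  · obtain ⟨v, huv, hvu⟩ := isUnit_iff_exists.mp hu
    obtain ⟨a, r, rfl⟩ := exists_eq_single_of_mul_eq_one huv
    obtain ⟨b, s, rfl⟩ := exists_eq_single_of_mul_eq_one hvu
    rw [single_mul_single_eq_one_iff] at huv hvu
    exact ⟨r, a, isUnit_iff_exists.mpr ⟨s, huv.2, hvu.2⟩,
      isAddUnit_iff_exists.mpr ⟨b, huv.1, hvu.1⟩, rfl⟩
  · obtain ⟨b, hab, hba⟩ := isAddUnit_iff_exists.mp ha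
    obtain ⟨s, hrs, hsr⟩ := isUnit_iff_exists.mp hr
    rw [hu, isUnit_iff_exists]
    exact ⟨single b s, single_mul_single_eq_one_iff.mpr ⟨hab, hrs⟩,
      single_mul_single_eq_one_iff.mpr ⟨hba, hsr⟩⟩

end AddMonoidAlgebra

theorem stmt_4_general (n : ℕ) (S : AddSubmonoid (Fin n → ℤ))
    (u : AddMonoidAlgebra ℂ S) :
    IsUnit u ↔ ∃ (c : ℂ) (m : S), c ≠ 0 ∧ -(m : Fin n → ℤ) ∈ S ∧
      u = AddMonoidAlgebra.single m c := by
  simp only [AddMonoidAlgebra.isUnit_iff_exists_single, AddSubmonoid.isAddUnit_iff_neg_mem,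
    isUnit_iff_ne_zero]

/-- For `n ≥ 1` and an additive submonoid `S ⊆ ℤ^n`, an element `u` of the monoid
algebra `ℂ[S]` is a unit iff `u = c·z^m` for some nonzero `c ∈ ℂ` and `m ∈ S` with `-m ∈ S`. -/
theorem stmt_4 (n : ℕ) (hn : 1 ≤ n) (S : AddSubmonoid (Fin n → ℤ))
    (u : AddMonoidAlgebra ℂ S) :
    IsUnit u ↔ ∃ (c : ℂ) (m : S), c ≠ 0 ∧ -(m : Fin n → ℤ) ∈ S ∧
      u = AddMonoidAlgebra.single m c :=
  stmt_4_general n S u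
end

section
/- For n ≥ 1, let φ : ℤ^n → ℚ be given by φ(m) = max_{i ∈ I} ⟨u_i, m⟩ for a finite nonempty family of linear forms u_i ∈ (ℚ^n)^*, let P = {(m,h) ∈ ℤ^n × ℤ : φ(m) ≤ h}, let A = AddMonoidAlgebra ℂ P, and let t = z^{(0,1)}. Then for any (m,h) ∈ P, the image of the monomial z^{(m,h)} in the quotient ring A/(t) is nilpotent if and only if φ(m) < h. -/
/-!
The monomial `t = z^{(0,1)}` divides `z^q` exactly when `q - (0,1)` lies in `P`, i.e. when
`φ(q.1) + 1 ≤ q.2`. Since `φ` is positively homogeneous, `z^{(m,h)}` has a power in `(t)` iff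
`k φ(m) ≤ k h - 1` for some `k : ℕ`, which by the Archimedean property means `φ(m) < h`.
-/

theorem Ideal.Quotient.isNilpotent_mk_iff {R : Type*} [CommRing R] {I : Ideal R} {x : R} :
    IsNilpotent (Ideal.Quotient.mk I x) ↔ x ∈ I.radical := by
  simp only [IsNilpotent, ← map_pow, Ideal.Quotient.eq_zero_iff_mem, Ideal.mem_radical_iff]

namespace AddMonoidAlgebra

theorem single_one_dvd_single_one_iff {R M : Type*} [Semiring R] [Nontrivial R] [AddMonoid M]
    {a b : M} : single a (1 : R) ∣ single b 1 ↔ ∃ c, b = a + c := by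
  classical
  constructor
  · rintro ⟨x, hx⟩
    have hb : b ∈ (single a (1 : R) * x).coeff.support := by simp [← hx]
    obtain ⟨c, -, rfl⟩ := Finset.mem_image.mp (support_coeff_single_mul_subset x 1 a hb)
    exact ⟨c, rfl⟩
  · rintro ⟨c, rfl⟩
    exact ⟨single c 1, by rw [single_mul_single, mul_one]⟩

end AddMonoidAlgebra

theorem AddSubmonoid.exists_eq_add_iff_sub_mem {G : Type*} [AddCommGroup G] {P : AddSubmonoid G}
    (a b : P) : (∃ c : P, b = a + c) ↔ (b : G) - a ∈ P := by
  constructor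
  · rintro ⟨c, rfl⟩
    simp
  · intro h
    exact ⟨⟨_, h⟩, Subtype.ext (add_sub_cancel _ _).symm⟩

theorem Finset.sup'_linearMap_apply_smul {ι K V : Type*} [Field K] [LinearOrder K]
    [IsStrictOrderedRing K] [AddCommGroup V] [Module K V] (s : Finset ι) (hs : s.Nonempty)
    (L : ι → V →ₗ[K] K) {c : K} (hc : 0 ≤ c) (v : V) :
    s.sup' hs (fun i => L i (c • v)) = c * s.sup' hs (fun i => L i v) := by
  simp only [map_smul, smul_eq_mul, mul₀_sup' hc]

theorem exists_nat_mul_le_mul_sub_one_iff {K : Type*} [Field K] [LinearOrder K]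
    [IsStrictOrderedRing K] [Archimedean K] {a b : K} :
    (∃ k : ℕ, k * a ≤ k * b - 1) ↔ a < b := by
  constructor
  · rintro ⟨k, hk⟩
    by_contra! hba
    linarith [mul_le_mul_of_nonneg_left hba k.cast_nonneg]
  · intro hab
    obtain ⟨k, hk⟩ := exists_nat_gt (b - a)⁻¹
    refine ⟨k, ?_⟩
    have hk' : 1 < k * (b - a) := (inv_lt_iff_one_lt_mul₀ (sub_pos.mpr hab)).mp hk
    linarith

theorem stmt_5_general (n : ℕ)
    (ι : Type) [Fintype ι] [Nonempty ι]
    (L : ι → ((Fin n → ℚ) →ₗ[ℚ] ℚ))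
    (φ : (Fin n → ℤ) → ℚ)
    (hφ : ∀ m : Fin n → ℤ,
      φ m = Finset.univ.sup' Finset.univ_nonempty (fun i => L i (fun j => (m j : ℚ))))
    (P : AddSubmonoid ((Fin n → ℤ) × ℤ))
    (hP : ∀ p : (Fin n → ℤ) × ℤ, p ∈ P ↔ φ p.1 ≤ (p.2 : ℚ))
    (h01 : ((0 : Fin n → ℤ), (1 : ℤ)) ∈ P)
    (t : AddMonoidAlgebra ℂ P)
    (ht : t = AddMonoidAlgebra.single (⟨((0 : Fin n → ℤ), (1 : ℤ)), h01⟩ : P) 1) :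
    ∀ p : P, IsNilpotent ((Ideal.Quotient.mk (Ideal.span {t}))
        (AddMonoidAlgebra.single p 1)) ↔
      φ (p : (Fin n → ℤ) × ℤ).1 < (((p : (Fin n → ℤ) × ℤ).2 : ℤ) : ℚ) := by
  have φ_nsmul (k : ℕ) (m : Fin n → ℤ) : φ (k • m) = k * φ m := by
    have hcast : (fun j => (((k • m) j : ℤ) : ℚ)) = (k : ℚ) • fun j => (m j : ℚ) := by
      ext j; simp
    rw [hφ, hφ, hcast, Finset.sup'_linearMap_apply_smul _ _ _ k.cast_nonneg]
  rintro ⟨⟨m, h⟩, -⟩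
  simp only [Ideal.Quotient.isNilpotent_mk_iff, Ideal.mem_radical_iff, Ideal.mem_span_singleton,
    AddMonoidAlgebra.single_pow, one_pow, ht, AddMonoidAlgebra.single_one_dvd_single_one_iff,
    AddSubmonoid.exists_eq_add_iff_sub_mem, hP, AddSubmonoidClass.coe_nsmul, Prod.fst_sub,
    Prod.snd_sub, Prod.smul_fst, Prod.smul_snd, sub_zero, φ_nsmul]
  push_cast [nsmul_eq_mul]
  exact exists_nat_mul_le_mul_sub_one_iff

/-- For `φ(m) = max_i ⟨u_i, m⟩` a tropical polynomial on `ℤ^n`,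
`P = {(m,h) : φ(m) ≤ h}`, `A = ℂ[P]` and `t = z^{(0,1)}`, the class of a monomial `z^{(m,h)}`
in `A/(t)` is nilpotent iff `φ(m) < h`. -/
theorem stmt_5 (n : ℕ) (hn : 1 ≤ n)
    (ι : Type) [Fintype ι] [Nonempty ι]
    (L : ι → ((Fin n → ℚ) →ₗ[ℚ] ℚ))
    (φ : (Fin n → ℤ) → ℚ)
    (hφ : ∀ m : Fin n → ℤ,
      φ m = Finset.univ.sup' Finset.univ_nonempty (fun i => L i (fun j => (m j : ℚ))))
    (P : AddSubmonoid ((Fin n → ℤ) × ℤ))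
    (hP : ∀ p : (Fin n → ℤ) × ℤ, p ∈ P ↔ φ p.1 ≤ (p.2 : ℚ))
    (h01 : ((0 : Fin n → ℤ), (1 : ℤ)) ∈ P)
    (t : AddMonoidAlgebra ℂ P)
    (ht : t = AddMonoidAlgebra.single (⟨((0 : Fin n → ℤ), (1 : ℤ)), h01⟩ : P) 1) :
    ∀ p : P, IsNilpotent ((Ideal.Quotient.mk (Ideal.span {t}))
        (AddMonoidAlgebra.single p 1)) ↔
      φ (p : (Fin n → ℤ) × ℤ).1 < (((p : (Fin n → ℤ) × ℤ).2 : ℤ) : ℚ) :=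
  stmt_5_general n ι L φ hφ P hP h01 t ht
end

section
/- For n ≥ 1, let φ : ℤ^n → ℚ be given by φ(m) = max_{i ∈ I} ⟨u_i, m⟩ for a finite nonempty family of linear forms u_i ∈ (ℚ^n)^*, let P = {(m,h) ∈ ℤ^n × ℤ : φ(m) ≤ h}, let A = AddMonoidAlgebra ℂ P, and let t = z^{(0,1)}. Then the images in A/(t) of the monomials z^{(m,h)} with (m,h) ∈ P satisfying φ(m) ≤ h < φ(m) + 1 form a ℂ-basis of the quotient ring A/(t). -/
/-!
By `AddMonoidAlgebra.mem_ideal_span_of'_image`, the principal ideal generated by a monomial `z^e`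
consists of the elements supported on `P + e`. Hence modulo `(z^e)` the monomials `z^p` with
`p ∉ P + e` stay linearly independent, while all others vanish. For `e = (0,1)` we have
`(m,h) ∈ P + e` iff `φ(m) ≤ h - 1`, so the monomials outside `P + e` are those with `h < φ(m) + 1`.
-/

namespace AddMonoidAlgebra

variable {k A : Type*}

theorem mem_span_single_one_iff [Semiring k] [AddMonoid A] {e : A} {x : AddMonoidAlgebra k A} :
    x ∈ Ideal.span {single e 1} ↔ ∀ m ∈ x.coeff.support, ∃ d, m = d + e := by
  rw [← of'_apply, ← Set.image_singleton, mem_ideal_span_of'_image]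
  simp

variable [CommRing k] [AddCommMonoid A] {e : A} {Q : A → Prop}

theorem linearIndependent_mk_single_one (hQ : ∀ m, Q m → ∀ d, m ≠ d + e) :
    LinearIndependent k
      (fun m : {m // Q m} ↦ Ideal.Quotient.mk (Ideal.span {single e (1 : k)}) (single m.1 1)) := by
  rw [linearIndependent_iff]
  intro l hl
  have hmem : ofCoeff (l.mapDomain Subtype.val) ∈ Ideal.span {single e (1 : k)} := by
    rw [← Ideal.Quotient.eq_zero_iff_mem, ← hl, Finsupp.linearCombination_apply, Finsupp.mapDomain,
      ofCoeff_finsuppSum, map_finsuppSum]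
    refine Finsupp.sum_congr fun m _ ↦ ?_
    rw [← Ideal.Quotient.mkₐ_eq_mk k, ← map_smul, smul_single', mul_one]
    rfl
  ext m
  by_contra hm
  obtain ⟨d, hd⟩ := mem_span_single_one_iff.mp hmem m.1 (by
    simpa [Finsupp.mapDomain_apply Subtype.val_injective] using hm)
  exact hQ m.1 m.2 d hd

theorem span_range_mk_single_one (hQ : ∀ m, ¬ Q m → ∃ d, m = d + e) :
    Submodule.span k (Set.range
      (fun m : {m // Q m} ↦ Ideal.Quotient.mk (Ideal.span {single e (1 : k)}) (single m.1 1))) =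
      ⊤ := by
  set I := Ideal.span {single e (1 : k)}
  have hsingle : ∀ m, Ideal.Quotient.mk I (single m 1) ∈ Submodule.span k (Set.range
      (fun m : {m // Q m} ↦ Ideal.Quotient.mk I (single m.1 1))) := by
    intro m
    by_cases hm : Q m
    · exact Submodule.subset_span ⟨⟨m, hm⟩, rfl⟩
    · obtain ⟨d, rfl⟩ := hQ m hm
      have hzero : Ideal.Quotient.mk I (single (d + e) 1) = 0 := by
        rw [Ideal.Quotient.eq_zero_iff_mem, ← one_mul (1 : k), ← single_mul_single]
        exact Ideal.mul_mem_left _ _ (Ideal.mem_span_singleton_self _)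
      exact hzero ▸ Submodule.zero_mem _
  rw [eq_top_iff]
  rintro x -
  obtain ⟨x, rfl⟩ := Ideal.Quotient.mk_surjective x
  induction x using AddMonoidAlgebra.induction_on with
  | of m => exact hsingle m
  | add x y hx hy => rw [map_add]; exact Submodule.add_mem _ hx hy
  | smul c x hx => rw [← Ideal.Quotient.mkₐ_eq_mk k, map_smul]; exact Submodule.smul_mem _ _ hx

end AddMonoidAlgebra

theorem exists_eq_add_zero_one_iff {M : Type*} [AddZeroClass M] {φ : M → ℚ}
    {P : AddSubmonoid (M × ℤ)} (hP : ∀ p, p ∈ P ↔ φ p.1 ≤ p.2) (h01 : ((0 : M), (1 : ℤ)) ∈ P)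
    (q : P) : (∃ d : P, q = d + ⟨(0, 1), h01⟩) ↔ φ q.1.1 + 1 ≤ q.1.2 := by
  constructor
  · rintro ⟨d, rfl⟩
    have := (hP d).mp d.2
    simp only [AddSubmonoid.coe_add, Prod.fst_add, add_zero, Prod.snd_add, Int.cast_add,
      Int.cast_one]
    linarith
  · intro hq
    have hd : (q.1.1, q.1.2 - 1) ∈ P := (hP _).mpr (by push_cast; linarith)
    exact ⟨⟨_, hd⟩, Subtype.ext (by ext <;> simp)⟩

theorem stmt_6_general (n : ℕ)
    (φ : (Fin n → ℤ) → ℚ)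
    (P : AddSubmonoid ((Fin n → ℤ) × ℤ))
    (hP : ∀ p : (Fin n → ℤ) × ℤ, p ∈ P ↔ φ p.1 ≤ (p.2 : ℚ))
    (h01 : ((0 : Fin n → ℤ), (1 : ℤ)) ∈ P)
    (t : AddMonoidAlgebra ℂ P)
    (ht : t = AddMonoidAlgebra.single (⟨((0 : Fin n → ℤ), (1 : ℤ)), h01⟩ : P) 1)
    (v : {p : P // ((((p : (Fin n → ℤ) × ℤ).2 : ℤ) : ℚ) < φ (p : (Fin n → ℤ) × ℤ).1 + 1)} →
        AddMonoidAlgebra ℂ P ⧸ Ideal.span {t})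
    (hv : ∀ q, v q = Ideal.Quotient.mk (Ideal.span {t}) (AddMonoidAlgebra.single q.val 1)) :
    LinearIndependent ℂ v ∧ Submodule.span ℂ (Set.range v) = ⊤ := by
  subst ht
  obtain rfl : v = fun q ↦ Ideal.Quotient.mk _ (AddMonoidAlgebra.single q.val 1) := funext hv
  have hdiv := exists_eq_add_zero_one_iff hP h01
  exact ⟨AddMonoidAlgebra.linearIndependent_mk_single_one fun q hq d hd ↦
      ((hdiv q).mp ⟨d, hd⟩).not_gt hq,
    AddMonoidAlgebra.span_range_mk_single_one fun q hq ↦ (hdiv q).mpr (not_lt.mp hq)⟩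

/-- With `φ`, `P`, `A = ℂ[P]`, `t = z^{(0,1)}` as before, the classes in `A/(t)` of
the monomials `z^{(m,h)}`, `(m,h) ∈ P` with `φ(m) ≤ h < φ(m) + 1`, form a ℂ-basis of `A/(t)`. -/
theorem stmt_6 (n : ℕ) (hn : 1 ≤ n)
    (ι : Type) [Fintype ι] [Nonempty ι]
    (L : ι → ((Fin n → ℚ) →ₗ[ℚ] ℚ))
    (φ : (Fin n → ℤ) → ℚ)
    (hφ : ∀ m : Fin n → ℤ,
      φ m = Finset.univ.sup' Finset.univ_nonempty (fun i => L i (fun j => (m j : ℚ))))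
    (P : AddSubmonoid ((Fin n → ℤ) × ℤ))
    (hP : ∀ p : (Fin n → ℤ) × ℤ, p ∈ P ↔ φ p.1 ≤ (p.2 : ℚ))
    (h01 : ((0 : Fin n → ℤ), (1 : ℤ)) ∈ P)
    (t : AddMonoidAlgebra ℂ P)
    (ht : t = AddMonoidAlgebra.single (⟨((0 : Fin n → ℤ), (1 : ℤ)), h01⟩ : P) 1)
    (v : {p : P // ((((p : (Fin n → ℤ) × ℤ).2 : ℤ) : ℚ) < φ (p : (Fin n → ℤ) × ℤ).1 + 1)} →
        AddMonoidAlgebra ℂ P ⧸ Ideal.span {t})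
    (hv : ∀ q, v q = Ideal.Quotient.mk (Ideal.span {t}) (AddMonoidAlgebra.single q.val 1)) :
    LinearIndependent ℂ v ∧ Submodule.span ℂ (Set.range v) = ⊤ :=
  stmt_6_general n φ P hP h01 t ht v hv
end

section
/- For n ≥ 1, let φ : ℤ^n → ℚ be given by φ(m) = max_{i ∈ I} ⟨u_i, m⟩ for a finite nonempty family of linear forms u_i ∈ (ℚ^n)^*, and assume additionally that φ(m) ∈ ℤ for every m ∈ ℤ^n. Let P = {(m,h) ∈ ℤ^n × ℤ : φ(m) ≤ h}, A = AddMonoidAlgebra ℂ P, and t = z^{(0,1)}. Then for all m, m' ∈ ℤ^n, in the quotient ring A/(t) the product of the classes of z^{(m,φ(m))} and z^{(m',φ(m'))} equals the class of z^{(m+m',φ(m+m'))} if φ(m+m') = φ(m) + φ(m'), and equals 0 otherwise. -/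
/-!
Each `φ m` is a maximum of linear forms, so `φ` is subadditive. Multiplying the two monomials gives
`z^{(m + m', φ m + φ m')}`. If `φ` is additive at `(m, m')` this is the monomial on the lower
boundary of `P`. Otherwise `φ (m + m') < φ m + φ m'` with both sides integers, so
`(m + m', φ m + φ m' - 1)` still lies in `P`, and the product is `t` times its monomial.
-/

theorem Finset.sup'_apply_add_le {ι M R F : Type*} [AddCommMonoid M] [AddCommMonoid R]
    [LinearOrder R] [IsOrderedAddMonoid R] [FunLike F M R] [AddHomClass F M R]
    (s : Finset ι) (hs : s.Nonempty) (f : ι → F) (x y : M) :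
    s.sup' hs (fun i => f i (x + y)) ≤ s.sup' hs (fun i => f i x) + s.sup' hs (fun i => f i y) :=
  Finset.sup'_le hs _ fun i hi => by
    rw [map_add]
    exact add_le_add (le_sup' (fun i => f i x) hi) (le_sup' (fun i => f i y) hi)

theorem AddMonoidAlgebra.single_mem_span_single_of_add_eq {k G : Type*} [Semiring k] [AddMonoid G]
    {p q g : G} (h : q + g = p) (r : k) :
    single p r ∈ Ideal.span {single g (1 : k)} :=
  Ideal.mem_span_singleton'.2 ⟨single q r, by rw [single_mul_single, mul_one, h]⟩

theorem stmt_7_general (n : ℕ)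
    (ι : Type) [Fintype ι] [Nonempty ι]
    (L : ι → ((Fin n → ℚ) →ₗ[ℚ] ℚ))
    (φ : (Fin n → ℤ) → ℚ)
    (hφ : ∀ m : Fin n → ℤ,
      φ m = Finset.univ.sup' Finset.univ_nonempty (fun i => L i (fun j => (m j : ℚ))))
    (P : AddSubmonoid ((Fin n → ℤ) × ℤ))
    (hP : ∀ p : (Fin n → ℤ) × ℤ, p ∈ P ↔ φ p.1 ≤ (p.2 : ℚ))
    (h01 : ((0 : Fin n → ℤ), (1 : ℤ)) ∈ P)
    (t : AddMonoidAlgebra ℂ P)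
    (ht : t = AddMonoidAlgebra.single (⟨((0 : Fin n → ℤ), (1 : ℤ)), h01⟩ : P) 1)
    (m m' : Fin n → ℤ) (km km' ks : ℤ)
    (hkm : (km : ℚ) = φ m) (hkm' : (km' : ℚ) = φ m') (hks : (ks : ℚ) = φ (m + m'))
    (pm : (m, km) ∈ P) (pm' : (m', km') ∈ P) (ps : (m + m', ks) ∈ P) :
    (Ideal.Quotient.mk (Ideal.span {t}) (AddMonoidAlgebra.single (⟨(m, km), pm⟩ : P) 1)) *
        (Ideal.Quotient.mk (Ideal.span {t}) (AddMonoidAlgebra.single (⟨(m', km'), pm'⟩ : P) 1)) =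
      if φ (m + m') = φ m + φ m' then
        Ideal.Quotient.mk (Ideal.span {t}) (AddMonoidAlgebra.single (⟨(m + m', ks), ps⟩ : P) 1)
      else 0 := by
  have hsub : φ (m + m') ≤ φ m + φ m' := by
    have hcast : (fun j => (((m + m') j : ℤ) : ℚ)) =
        (fun j => (m j : ℚ)) + (fun j => (m' j : ℚ)) := by
      ext j; simp
    rw [hφ, hφ, hφ, hcast]
    exact Finset.sup'_apply_add_le _ _ L _ _
  rw [← map_mul, AddMonoidAlgebra.single_mul_single, one_mul]
  split_ifs with hadd
  · have hk : km + km' = ks := by exact_mod_cast (show (km + km' : ℚ) = ks by linarith)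
    exact congrArg _ (congrArg₂ _ (Subtype.ext (Prod.ext rfl hk)) rfl)
  · have hlt : ks < km + km' := by
      exact_mod_cast (show (ks : ℚ) < km + km' by linarith [lt_of_le_of_ne hsub hadd])
    have hq : (m + m', km + km' - 1) ∈ P := by
      rw [hP]
      exact hks ▸ (show (ks : ℚ) ≤ ((km + km' - 1 : ℤ) : ℚ) by exact_mod_cast (by omega))
    rw [Ideal.Quotient.eq_zero_iff_mem, ht]
    exact AddMonoidAlgebra.single_mem_span_single_of_add_eq
      (q := ⟨_, hq⟩) (Subtype.ext (Prod.ext (add_zero _) (sub_add_cancel _ _))) 1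

/-- With `φ`, `P`, `A = ℂ[P]`, `t = z^{(0,1)}` as before, and assuming `φ` takes
integral values on `ℤ^n`, in `A/(t)` the product of the classes of `z^{(m,φ(m))}` and
`z^{(m',φ(m'))}` is the class of `z^{(m+m',φ(m+m'))}` if `φ(m+m') = φ(m) + φ(m')`, and `0`
otherwise. -/
theorem stmt_7 (n : ℕ) (hn : 1 ≤ n)
    (ι : Type) [Fintype ι] [Nonempty ι]
    (L : ι → ((Fin n → ℚ) →ₗ[ℚ] ℚ))
    (φ : (Fin n → ℤ) → ℚ)
    (hφ : ∀ m : Fin n → ℤ,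
      φ m = Finset.univ.sup' Finset.univ_nonempty (fun i => L i (fun j => (m j : ℚ))))
    (hint : ∀ m : Fin n → ℤ, ∃ km : ℤ, φ m = (km : ℚ))
    (P : AddSubmonoid ((Fin n → ℤ) × ℤ))
    (hP : ∀ p : (Fin n → ℤ) × ℤ, p ∈ P ↔ φ p.1 ≤ (p.2 : ℚ))
    (h01 : ((0 : Fin n → ℤ), (1 : ℤ)) ∈ P)
    (t : AddMonoidAlgebra ℂ P)
    (ht : t = AddMonoidAlgebra.single (⟨((0 : Fin n → ℤ), (1 : ℤ)), h01⟩ : P) 1)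
    (m m' : Fin n → ℤ) (km km' ks : ℤ)
    (hkm : (km : ℚ) = φ m) (hkm' : (km' : ℚ) = φ m') (hks : (ks : ℚ) = φ (m + m'))
    (pm : (m, km) ∈ P) (pm' : (m', km') ∈ P) (ps : (m + m', ks) ∈ P) :
    (Ideal.Quotient.mk (Ideal.span {t}) (AddMonoidAlgebra.single (⟨(m, km), pm⟩ : P) 1)) *
        (Ideal.Quotient.mk (Ideal.span {t}) (AddMonoidAlgebra.single (⟨(m', km'), pm'⟩ : P) 1)) =
      if φ (m + m') = φ m + φ m' then
        Ideal.Quotient.mk (Ideal.span {t}) (AddMonoidAlgebra.single (⟨(m + m', ks), ps⟩ : P) 1)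
      else 0 :=
  stmt_7_general n ι L φ hφ P hP h01 t ht m m' km km' ks hkm hkm' hks pm pm' ps
end

section
/- For n ≥ 1, let φ : ℤ^n → ℚ be given by φ(m) = max_{i ∈ I} ⟨u_i, m⟩ for a finite nonempty family of linear forms u_i ∈ (ℚ^n)^*, let P = {(m,h) ∈ ℤ^n × ℤ : φ(m) ≤ h}, let A = AddMonoidAlgebra ℂ P, and let t = z^{(0,1)}. Then the quotient ring A/(t) is reduced (has no nonzero nilpotent elements) if and only if φ(m) ∈ ℤ for every m ∈ ℤ^n. -/
/-!
If `φ m` is not an integer, `z^(m, ⌈φ m⌉)` is not divisible by `t = z^(0, 1)`, but its `j`-th power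
is as soon as `j * (⌈φ m⌉ - φ m) > 1`, since `φ (j • m) = j * φ m`: a nonzero nilpotent in `A/(t)`.

If `φ` is integral, `t` divides every monomial `z^(m, h)` with `h > φ m`, so `x ∈ (t)` iff `x` has
no monomial on the graph `h = φ m`. That graph is covered by the faces `h = ℓᵢ m` of `P`, and
discarding the monomials off a face is a ring endomorphism of the domain `A` killing `t`. If
`xʲ ∈ (t)`, the projection of `x` to each face is nilpotent, hence zero, so `x ∈ (t)`.
-/

namespace AddMonoidAlgebra

variable {k M : Type*} [CommSemiring k] [AddCommMonoid M]

open Classical in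
noncomputable def faceProj (F : AddSubmonoid M) (hF : ∀ a b, a + b ∈ F → a ∈ F) :
    AddMonoidAlgebra k M →ₐ[k] AddMonoidAlgebra k M :=
  lift k (AddMonoidAlgebra k M) M
    { toFun := fun p => if p.toAdd ∈ F then single p.toAdd 1 else 0
      map_one' := by simp [F.zero_mem, one_def]
      map_mul' := fun a b => by
        have hab : a.toAdd + b.toAdd ∈ F ↔ a.toAdd ∈ F ∧ b.toAdd ∈ F :=
          ⟨fun h => ⟨hF _ _ h, hF _ _ (add_comm a.toAdd b.toAdd ▸ h)⟩,
            fun h => F.add_mem h.1 h.2⟩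
        simp only [toAdd_mul, hab]
        split_ifs <;> simp_all [single_mul_single] }

variable {F : AddSubmonoid M} {hF : ∀ a b, a + b ∈ F → a ∈ F}

theorem faceProj_single_of_notMem {p : M} (hp : p ∉ F) (c : k) :
    faceProj F hF (single p c) = 0 := by
  simp [faceProj, lift_single, hp]

open Classical in
theorem coeff_faceProj (x : AddMonoidAlgebra k M) (p : M) :
    (faceProj F hF x).coeff p = if p ∈ F then x.coeff p else 0 := by
  induction x using AddMonoidAlgebra.induction_linear with
  | zero => simp
  | add x y hx hy =>
    simp only [map_add, coeff_add, Finsupp.add_apply, hx, hy]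
    split_ifs <;> simp
  | single q c =>
    rw [faceProj, lift_single]
    by_cases hq : q ∈ F <;> by_cases hpq : q = p <;> simp_all [coeff_single]

end AddMonoidAlgebra

instance AddSubmonoid.uniqueSums {G : Type*} [AddMonoid G] [UniqueSums G] (P : AddSubmonoid G) :
    UniqueSums P :=
  UniqueSums.of_injective_addHom P.subtype.toAddHom Subtype.val_injective inferInstance

theorem map_nsmul_of_forall_isGreatest {ι M : Type*} [AddCommMonoid M] {ℓ : ι → M →+ ℚ}
    {φ : M → ℚ} (hφ : ∀ m, IsGreatest (Set.range fun i => ℓ i m) (φ m)) (j : ℕ) (m : M) :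
    φ (j • m) = j * φ m := by
  obtain ⟨i, hi : ℓ i (j • m) = φ (j • m)⟩ := (hφ (j • m)).1
  obtain ⟨i', hi' : ℓ i' m = φ m⟩ := (hφ m).1
  apply le_antisymm
  · rw [← hi, map_nsmul, nsmul_eq_mul]
    exact mul_le_mul_of_nonneg_left ((hφ m).2 ⟨i, rfl⟩) j.cast_nonneg
  · rw [← hi', ← nsmul_eq_mul, ← map_nsmul]
    exact (hφ _).2 ⟨i', rfl⟩

open AddMonoidAlgebra

section UpperGraph

variable {k M : Type*} [CommRing k] [AddCommMonoid M] {φ : M → ℚ} {P : AddSubmonoid (M × ℤ)}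

variable (P) in
def supportFace (ℓ : M →+ ℚ) : AddSubmonoid P where
  carrier := {p | ℓ (p : M × ℤ).1 = (p : M × ℤ).2}
  zero_mem' := by simp
  add_mem' {a b} ha hb := by simp_all

theorem mem_supportFace {ℓ : M →+ ℚ} {p : P} :
    p ∈ supportFace P ℓ ↔ ℓ (p : M × ℤ).1 = (p : M × ℤ).2 :=
  Iff.rfl

variable (h01 : ((0 : M), (1 : ℤ)) ∈ P)

theorem mem_span_single_zero_one_iff (hP : ∀ p : M × ℤ, p ∈ P ↔ φ p.1 ≤ p.2)
    {x : AddMonoidAlgebra k P} :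
    x ∈ Ideal.span {single ⟨(0, 1), h01⟩ 1} ↔
      ∀ p ∈ x.coeff.support, φ (p : M × ℤ).1 ≤ (p : M × ℤ).2 - 1 := by
  rw [← of'_apply, ← Set.image_singleton, mem_ideal_span_of'_image]
  refine forall₂_congr fun p _ => ?_
  simp only [Set.mem_singleton_iff, exists_eq_left]
  constructor
  · rintro ⟨d, rfl⟩
    simpa only [AddSubmonoid.coe_add, Prod.fst_add, add_zero, Prod.snd_add, Int.cast_add,
      Int.cast_one, add_sub_cancel_right] using (hP _).1 d.2
  · intro h
    refine ⟨⟨((p : M × ℤ).1, (p : M × ℤ).2 - 1), (hP _).2 (by push_cast; exact h)⟩,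
      Subtype.ext (Prod.ext ?_ ?_)⟩ <;> simp

theorem single_mem_span_single_zero_one_iff (hP : ∀ p : M × ℤ, p ∈ P ↔ φ p.1 ≤ p.2)
    {p : P} {c : k} (hc : c ≠ 0) :
    single p c ∈ Ideal.span {single ⟨(0, 1), h01⟩ 1} ↔ φ (p : M × ℤ).1 ≤ (p : M × ℤ).2 - 1 := by
  rw [mem_span_single_zero_one_iff h01 hP, coeff_single, Finsupp.support_single _ hc]
  simp

theorem exists_int_eq_of_isRadical [Nontrivial k] (hP : ∀ p : M × ℤ, p ∈ P ↔ φ p.1 ≤ p.2)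
    (hφ : ∀ (j : ℕ) m, φ (j • m) = j * φ m)
    (hrad : (Ideal.span {single (⟨(0, 1), h01⟩ : P) (1 : k)}).IsRadical) (m : M) :
    ∃ z : ℤ, φ m = z := by
  by_contra! hm
  have hlt : φ m < ⌈φ m⌉ := lt_of_le_of_ne (Int.le_ceil _) (hm _)
  let p : P := ⟨(m, ⌈φ m⌉), (hP _).2 (Int.le_ceil _)⟩
  obtain ⟨j, hj⟩ := exists_nat_gt (1 / (⌈φ m⌉ - φ m))
  rw [div_lt_iff₀ (sub_pos.2 hlt)] at hj
  have hp : single p (1 : k) ∉ Ideal.span {single ⟨(0, 1), h01⟩ 1} := by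
    rw [single_mem_span_single_zero_one_iff h01 hP one_ne_zero]
    simp only [p, not_le]
    linarith [Int.ceil_lt_add_one (φ m)]
  refine hp (hrad ⟨j, ?_⟩)
  rw [single_pow, one_pow, single_mem_span_single_zero_one_iff h01 hP one_ne_zero]
  simp only [p, AddSubmonoidClass.mk_nsmul, Prod.smul_mk, Int.nsmul_eq_mul, hφ, Int.cast_mul,
    Int.cast_natCast]
  linarith

theorem mem_supportFace_of_add_mem (hP : ∀ p : M × ℤ, p ∈ P ↔ φ p.1 ≤ p.2) {ℓ : M →+ ℚ}
    (hℓ : ∀ m, ℓ m ≤ φ m) (a b : P)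
    (hab : a + b ∈ supportFace P ℓ) : a ∈ supportFace P ℓ := by
  have hle : ∀ p : P, ℓ (p : M × ℤ).1 ≤ (p : M × ℤ).2 := fun p => (hℓ _).trans ((hP _).1 p.2)
  simp only [mem_supportFace, AddSubmonoid.coe_add, Prod.fst_add, Prod.snd_add, map_add,
    Int.cast_add] at hab ⊢
  linarith [hle a, hle b]

theorem isRadical_of_forall_int [IsDomain k] [UniqueSums M]
    (hP : ∀ p : M × ℤ, p ∈ P ↔ φ p.1 ≤ p.2) {ι : Type*} {ℓ : ι → M →+ ℚ}
    (hφ : ∀ m, IsGreatest (Set.range fun i => ℓ i m) (φ m)) (hint : ∀ m, ∃ z : ℤ, φ m = z) :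
    (Ideal.span {single (⟨(0, 1), h01⟩ : P) (1 : k)}).IsRadical := by
  rintro x ⟨j, hj⟩
  rw [mem_span_single_zero_one_iff h01 hP]
  intro p hp
  by_contra! hlt
  have hmax : φ (p : M × ℤ).1 = (p : M × ℤ).2 := by
    obtain ⟨z, hz⟩ := hint (p : M × ℤ).1
    have hle := (hP _).1 p.2
    rw [hz] at hlt hle ⊢
    have h1 : z ≤ (p : M × ℤ).2 := by exact_mod_cast hle
    have h2 : (p : M × ℤ).2 - 1 < z := by exact_mod_cast hlt
    rw [show z = (p : M × ℤ).2 by omega]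
  obtain ⟨i, hi : ℓ i (p : M × ℤ).1 = φ (p : M × ℤ).1⟩ := (hφ (p : M × ℤ).1).1
  have hF := mem_supportFace_of_add_mem hP fun m => (hφ m).2 ⟨i, rfl⟩
  have hπx : faceProj (k := k) _ hF x = 0 := by
    refine IsReduced.eq_zero _ ⟨j, ?_⟩
    obtain ⟨y, hy⟩ := Ideal.mem_span_singleton'.1 hj
    rw [← map_pow, ← hy, map_mul, faceProj_single_of_notMem (by simp [mem_supportFace]), mul_zero]
  have hcoeff := coeff_faceProj (hF := hF) x p
  rw [hπx, if_pos (mem_supportFace.2 (hi.trans hmax))] at hcoeff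
  exact Finsupp.mem_support_iff.1 hp (by simpa using hcoeff.symm)

end UpperGraph

theorem stmt_8_general (n : ℕ)
    (ι : Type) [Fintype ι] [Nonempty ι]
    (L : ι → ((Fin n → ℚ) →ₗ[ℚ] ℚ))
    (φ : (Fin n → ℤ) → ℚ)
    (hφ : ∀ m : Fin n → ℤ,
      φ m = Finset.univ.sup' Finset.univ_nonempty (fun i => L i (fun j => (m j : ℚ))))
    (P : AddSubmonoid ((Fin n → ℤ) × ℤ))
    (hP : ∀ p : (Fin n → ℤ) × ℤ, p ∈ P ↔ φ p.1 ≤ (p.2 : ℚ))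
    (h01 : ((0 : Fin n → ℤ), (1 : ℤ)) ∈ P)
    (t : AddMonoidAlgebra ℂ P)
    (ht : t = AddMonoidAlgebra.single (⟨((0 : Fin n → ℤ), (1 : ℤ)), h01⟩ : P) 1) :
    IsReduced (AddMonoidAlgebra ℂ P ⧸ Ideal.span {t}) ↔
      ∀ m : Fin n → ℤ, ∃ km : ℤ, φ m = (km : ℚ) := by
  let ℓ : ι → (Fin n → ℤ) →+ ℚ := fun i =>
    (L i).toAddMonoidHom.comp (AddMonoidHom.compLeft (Int.castAddHom ℚ) (Fin n))
  have hφℓ : ∀ m, IsGreatest (Set.range fun i => ℓ i m) (φ m) := fun m => by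
    obtain ⟨i, -, hi⟩ := Finset.exists_mem_eq_sup' Finset.univ_nonempty fun i => ℓ i m
    rw [hφ m]
    refine ⟨⟨i, hi.symm⟩, ?_⟩
    rintro _ ⟨i, rfl⟩
    exact Finset.le_sup' (fun i => ℓ i m) (Finset.mem_univ i)
  subst ht
  rw [← Ideal.isRadical_iff_quotient_reduced]
  exact ⟨exists_int_eq_of_isRadical h01 hP (map_nsmul_of_forall_isGreatest hφℓ),
    isRadical_of_forall_int h01 hP hφℓ⟩

/-- With `φ`, `P`, `A = ℂ[P]`, `t = z^{(0,1)}` as before, the quotient ring `A/(t)`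
is reduced iff `φ(m) ∈ ℤ` for every `m ∈ ℤ^n`. -/
theorem stmt_8 (n : ℕ) (hn : 1 ≤ n)
    (ι : Type) [Fintype ι] [Nonempty ι]
    (L : ι → ((Fin n → ℚ) →ₗ[ℚ] ℚ))
    (φ : (Fin n → ℤ) → ℚ)
    (hφ : ∀ m : Fin n → ℤ,
      φ m = Finset.univ.sup' Finset.univ_nonempty (fun i => L i (fun j => (m j : ℚ))))
    (P : AddSubmonoid ((Fin n → ℤ) × ℤ))
    (hP : ∀ p : (Fin n → ℤ) × ℤ, p ∈ P ↔ φ p.1 ≤ (p.2 : ℚ))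
    (h01 : ((0 : Fin n → ℤ), (1 : ℤ)) ∈ P)
    (t : AddMonoidAlgebra ℂ P)
    (ht : t = AddMonoidAlgebra.single (⟨((0 : Fin n → ℤ), (1 : ℤ)), h01⟩ : P) 1) :
    IsReduced (AddMonoidAlgebra ℂ P ⧸ Ideal.span {t}) ↔
      ∀ m : Fin n → ℤ, ∃ km : ℤ, φ m = (km : ℚ) :=
  stmt_8_general n ι L φ hφ P hP h01 t ht
end

section
/- For n ≥ 1, let φ : ℤ^n → ℚ be given by φ(m) = max_{i ∈ I} ⟨u_i, m⟩ for a finite nonempty family of linear forms u_i ∈ (ℚ^n)^*, let P = {(m,h) ∈ ℤ^n × ℤ : φ(m) ≤ h}, let A = AddMonoidAlgebra ℂ P, and let t = z^{(0,1)}. Let B = AddMonoidAlgebra ℂ (ℤ^n × ℤ) be the Laurent polynomial algebra on the full lattice, and let j : A → B be the ℂ-algebra homomorphism induced by the inclusion P ⊆ ℤ^n × ℤ. Then B, via j, is the localization of A away from t: IsLocalization.Away t B holds. (Geometrically: inverting t on the toric local model of the degeneration yields the algebraic torus times the punctured line.) -/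
/-!
Inverting `t = z^(0,1)` turns each Laurent monomial `z^(m,h)` into `z^(m,h+k) / t^k`, and
`z^(m,h+k) ∈ A` once `k ≥ ⌈φ(m)⌉ - h`. One `k` serves all monomials of a given element of `B`,
so every element of `B` is `j(a) / j(t)^k`; as `j` is injective, `B = A[t⁻¹]`.
-/

namespace AddSubmonoid

variable {G : Type*} [AddCommMonoid G]

lemma exists_forall_add_nsmul_mem {M : AddSubmonoid G} {g : G} (hg : g ∈ M)
    (hM : ∀ x, ∃ k : ℕ, x + k • g ∈ M) (s : Finset G) :
    ∃ k : ℕ, ∀ x ∈ s, x + k • g ∈ M := by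
  classical
  induction s using Finset.induction_on with
  | empty => exact ⟨0, by simp⟩
  | insert a s _ ih =>
    obtain ⟨ka, hka⟩ := hM a
    obtain ⟨ks, hks⟩ := ih
    refine ⟨ka + ks, fun x hx => ?_⟩
    rcases Finset.mem_insert.mp hx with rfl | hx
    · simpa [add_nsmul, add_assoc] using M.add_mem hka (M.nsmul_mem hg ks)
    · simpa [add_nsmul, add_comm, add_left_comm, add_assoc] using
        M.add_mem (hks x hx) (M.nsmul_mem hg ka)

end AddSubmonoid

namespace AddMonoidAlgebra

variable {R G : Type*} [CommSemiring R] [AddCommGroup G]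

theorem isLocalization_away_mapDomainRingHom (M : AddSubmonoid G) {g : G} (hg : g ∈ M)
    (hM : ∀ x, ∃ k : ℕ, x + k • g ∈ M) :
    @IsLocalization.Away (AddMonoidAlgebra R M) _ (single ⟨g, hg⟩ 1) (AddMonoidAlgebra R G) _
      (mapDomainRingHom R M.subtype).toAlgebra := by
  let _ := (mapDomainRingHom R M.subtype).toAlgebra
  have algebraMap_single (p : M) (r : R) :
      algebraMap (AddMonoidAlgebra R M) (AddMonoidAlgebra R G) (single p r) = single ↑p r :=
    mapDomain_single
  have algebraMap_pow (k : ℕ) :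
      algebraMap (AddMonoidAlgebra R M) (AddMonoidAlgebra R G) (single ⟨g, hg⟩ 1) ^ k =
        single (k • g) 1 := by
    rw [algebraMap_single, single_pow, one_pow]
  refine IsLocalization.Away.mk _ ?_ (fun z => ?_) (fun a b hab => ⟨0, ?_⟩)
  · rw [algebraMap_single]
    refine IsUnit.of_mul_eq_one (single (-g) 1) ?_
    rw [single_mul_single, add_neg_cancel, mul_one, one_def]
  · obtain ⟨k, hk⟩ := M.exists_forall_add_nsmul_mem hg hM z.coeff.support
    have hsupp : ↑(z * single (k • g) 1).coeff.support ⊆ Set.range M.subtype := by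
      rw [support_coeff_mul_single _ _ (by simp)]
      intro y hy
      obtain ⟨x, hx, rfl⟩ := Finset.mem_map.mp hy
      exact ⟨⟨_, hk x hx⟩, rfl⟩
    exact ⟨k, comapDomain _ Subtype.val_injective _,
      by rw [algebraMap_pow]; exact (mapDomain_comapDomain hsupp _).symm⟩
  · simpa using mapDomain_injective Subtype.val_injective hab

end AddMonoidAlgebra

theorem stmt_9_general (n : ℕ)
    (φ : (Fin n → ℤ) → ℚ)
    (P : AddSubmonoid ((Fin n → ℤ) × ℤ))
    (hP : ∀ p : (Fin n → ℤ) × ℤ, p ∈ P ↔ φ p.1 ≤ (p.2 : ℚ))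
    (h01 : ((0 : Fin n → ℤ), (1 : ℤ)) ∈ P)
    (t : AddMonoidAlgebra ℂ P)
    (ht : t = AddMonoidAlgebra.single (⟨((0 : Fin n → ℤ), (1 : ℤ)), h01⟩ : P) 1)
    (j : AddMonoidAlgebra ℂ P →ₐ[ℂ] AddMonoidAlgebra ℂ ((Fin n → ℤ) × ℤ))
    (hj : ∀ p : P, j (AddMonoidAlgebra.single p 1) =
        AddMonoidAlgebra.single (p : (Fin n → ℤ) × ℤ) 1) :
    @IsLocalization.Away (AddMonoidAlgebra ℂ P) _ t
      (AddMonoidAlgebra ℂ ((Fin n → ℤ) × ℤ)) _ j.toRingHom.toAlgebra := by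
  have shift_mem (p : (Fin n → ℤ) × ℤ) : ∃ k : ℕ, p + k • ((0 : Fin n → ℤ), (1 : ℤ)) ∈ P := by
    refine ⟨(⌈φ p.1⌉ - p.2).toNat, (hP _).2 ?_⟩
    have : ⌈φ p.1⌉ ≤ p.2 + (⌈φ p.1⌉ - p.2).toNat := by omega
    simpa using Int.ceil_le.mp this
  have hj_eq : j = AddMonoidAlgebra.mapDomainAlgHom ℂ ℂ P.subtype := by
    ext; simp [hj]
  subst ht hj_eq
  exact AddMonoidAlgebra.isLocalization_away_mapDomainRingHom P h01 shift_mem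

/-- With `φ`, `P`, `A = ℂ[P]`, `t = z^{(0,1)}` as before, the Laurent polynomial
algebra `B = ℂ[ℤ^n × ℤ]`, with the algebra structure given by the ℂ-algebra map `j` induced by
the inclusion `P ⊆ ℤ^n × ℤ`, is the localization of `A` away from `t`. -/
theorem stmt_9 (n : ℕ) (hn : 1 ≤ n)
    (ι : Type) [Fintype ι] [Nonempty ι]
    (L : ι → ((Fin n → ℚ) →ₗ[ℚ] ℚ))
    (φ : (Fin n → ℤ) → ℚ)
    (hφ : ∀ m : Fin n → ℤ,
      φ m = Finset.univ.sup' Finset.univ_nonempty (fun i => L i (fun j => (m j : ℚ))))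
    (P : AddSubmonoid ((Fin n → ℤ) × ℤ))
    (hP : ∀ p : (Fin n → ℤ) × ℤ, p ∈ P ↔ φ p.1 ≤ (p.2 : ℚ))
    (h01 : ((0 : Fin n → ℤ), (1 : ℤ)) ∈ P)
    (t : AddMonoidAlgebra ℂ P)
    (ht : t = AddMonoidAlgebra.single (⟨((0 : Fin n → ℤ), (1 : ℤ)), h01⟩ : P) 1)
    (j : AddMonoidAlgebra ℂ P →ₐ[ℂ] AddMonoidAlgebra ℂ ((Fin n → ℤ) × ℤ))
    (hj : ∀ p : P, j (AddMonoidAlgebra.single p 1) =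
        AddMonoidAlgebra.single (p : (Fin n → ℤ) × ℤ) 1) :
    @IsLocalization.Away (AddMonoidAlgebra ℂ P) _ t
      (AddMonoidAlgebra ℂ ((Fin n → ℤ) × ℤ)) _ j.toRingHom.toAlgebra :=
  stmt_9_general n φ P hP h01 t ht j hj
end

section
/- Let S = {(m₁,m₂,h) ∈ ℤ³ : h ≥ max(m₁,0) + max(m₂,0)}, an additive submonoid of ℤ³. Then the ℂ-algebra homomorphism ℂ[Z₁,Z₂,Z₃,Z₄] → AddMonoidAlgebra ℂ S determined by Z₁ ↦ z^{(1,0,1)}, Z₂ ↦ z^{(0,1,1)}, Z₃ ↦ z^{(−1,0,0)}, Z₄ ↦ z^{(0,−1,0)} is surjective with kernel the principal ideal generated by Z₁·Z₃ − Z₂·Z₄; hence it induces a ℂ-algebra isomorphism ℂ[Z₁,Z₂,Z₃,Z₄]/(Z₁Z₃ − Z₂Z₄) ≅ AddMonoidAlgebra ℂ S. -/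
/-!
The lattice points `u₁ = (1,0,1)`, `u₂ = (0,1,1)`, `u₃ = (-1,0,0)`, `u₄ = (0,-1,0)` generate the
cone, and `ψ` sends `Z^e` to `z^w(e)` with `w(e) = (e₁ - e₃, e₂ - e₄, e₁ + e₂)`. Two exponent
vectors of equal weight differ by a multiple of `(1,-1,1,-1)`, so their monomials agree modulo
`Z₁Z₃ - Z₂Z₄`. Choosing for each `p` in the cone the exponent vector of weight `p` with
`e₁ e₃ = 0` therefore gives a monoid map from the cone to `ℂ[Z]/(Z₁Z₃ - Z₂Z₄)`, i.e. an algebra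
map `ℂ[S] → ℂ[Z]/(Z₁Z₃ - Z₂Z₄)` whose composite with `ψ` is the quotient map. Hence the kernel
of `ψ` is the ideal, and `ψ` is onto since it hits each `z^p`.
-/

open MvPolynomial AddMonoidAlgebra

def conifoldCone : AddSubmonoid (ℤ × ℤ × ℤ) where
  carrier := {p | max p.1 0 + max p.2.1 0 ≤ p.2.2}
  zero_mem' := by simp
  add_mem' {p q} hp hq := by
    simp only [Set.mem_ofPred_eq, Prod.fst_add, Prod.snd_add] at *
    omega

theorem mem_conifoldCone {p : ℤ × ℤ × ℤ} :
    p ∈ conifoldCone ↔ max p.1 0 + max p.2.1 0 ≤ p.2.2 := Iff.rfl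

def conifoldGenerator : Fin 4 → conifoldCone :=
  ![⟨(1, 0, 1), mem_conifoldCone.2 (by decide)⟩, ⟨(0, 1, 1), mem_conifoldCone.2 (by decide)⟩,
    ⟨(-1, 0, 0), mem_conifoldCone.2 (by decide)⟩, ⟨(0, -1, 0), mem_conifoldCone.2 (by decide)⟩]

def conifoldWeight (e : Fin 4 → ℕ) : ℤ × ℤ × ℤ :=
  ((e 0 : ℤ) - e 2, (e 1 : ℤ) - e 3, (e 0 : ℤ) + e 1)

theorem conifoldWeight_eq_sum (e : Fin 4 → ℕ) :
    conifoldWeight e = ∑ i, e i • (conifoldGenerator i : ℤ × ℤ × ℤ) := by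
  ext <;> simp [conifoldWeight, conifoldGenerator, Fin.sum_univ_four] <;> ring

theorem conifoldWeight_add (e e' : Fin 4 → ℕ) :
    conifoldWeight (e + e') = conifoldWeight e + conifoldWeight e' := by
  simp only [conifoldWeight_eq_sum, Pi.add_apply, add_nsmul, Finset.sum_add_distrib]

/-- The exponent vector with `e 0 * e 2 = 0` and weight `p`; for `p` in the cone no `Int.toNat`
truncates. -/
def conifoldExponent (p : ℤ × ℤ × ℤ) : Fin 4 → ℕ :=
  ![p.1.toNat, (p.2.2 - max p.1 0).toNat, (-p.1).toNat, (p.2.2 - max p.1 0 - p.2.1).toNat]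

theorem conifoldWeight_conifoldExponent {p : ℤ × ℤ × ℤ} (hp : p ∈ conifoldCone) :
    conifoldWeight (conifoldExponent p) = p := by
  obtain ⟨m₁, m₂, h⟩ := p
  simp only [mem_conifoldCone] at hp
  simp only [conifoldWeight, conifoldExponent, Matrix.cons_val, Prod.mk.injEq]
  omega

section Monomial

variable {M : Type*} [CommMonoid M]

theorem pow_mul_pow_mul_pow_mul_pow_eq_of_mul_eq {x₀ x₁ x₂ x₃ : M} (h : x₀ * x₂ = x₁ * x₃)
    {a b c d a' b' c' d' : ℕ} (h₁ : (a : ℤ) - c = a' - c') (h₂ : (b : ℤ) - d = b' - d')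
    (h₃ : (a : ℤ) + b = a' + b') :
    x₀ ^ a * x₁ ^ b * x₂ ^ c * x₃ ^ d = x₀ ^ a' * x₁ ^ b' * x₂ ^ c' * x₃ ^ d' := by
  wlog hle : a' ≤ a generalizing a b c d a' b' c' d'
  · exact (this h₁.symm h₂.symm h₃.symm (by omega)).symm
  obtain ⟨k, rfl⟩ := Nat.exists_eq_add_of_le hle
  obtain ⟨rfl, rfl, rfl⟩ : c = c' + k ∧ b' = b + k ∧ d' = d + k := by omega
  calc x₀ ^ (a' + k) * x₁ ^ b * x₂ ^ (c' + k) * x₃ ^ d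
      = x₀ ^ a' * x₁ ^ b * x₂ ^ c' * x₃ ^ d * (x₀ * x₂) ^ k := by
        simp only [pow_add, mul_pow]; ac_rfl
    _ = x₀ ^ a' * x₁ ^ b * x₂ ^ c' * x₃ ^ d * (x₁ * x₃) ^ k := by rw [h]
    _ = x₀ ^ a' * x₁ ^ (b + k) * x₂ ^ c' * x₃ ^ (d + k) := by
        simp only [pow_add, mul_pow]; ac_rfl

theorem prod_pow_eq_of_conifoldWeight_eq {x : Fin 4 → M} (hx : x 0 * x 2 = x 1 * x 3)
    {e e' : Fin 4 → ℕ} (h : conifoldWeight e = conifoldWeight e') :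
    ∏ i, x i ^ e i = ∏ i, x i ^ e' i := by
  simp only [conifoldWeight, Prod.mk.injEq] at h
  simp only [Fin.prod_univ_four]
  exact pow_mul_pow_mul_pow_mul_pow_eq_of_mul_eq hx h.1 h.2.1 h.2.2

def conifoldMonomial (x : Fin 4 → M) (p : ℤ × ℤ × ℤ) : M :=
  ∏ i, x i ^ conifoldExponent p i

theorem conifoldMonomial_zero (x : Fin 4 → M) : conifoldMonomial x 0 = 1 := by
  simp [conifoldMonomial, conifoldExponent, Fin.prod_univ_four]

theorem conifoldMonomial_add {x : Fin 4 → M} (hx : x 0 * x 2 = x 1 * x 3) {p q : ℤ × ℤ × ℤ}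
    (hp : p ∈ conifoldCone) (hq : q ∈ conifoldCone) :
    conifoldMonomial x (p + q) = conifoldMonomial x p * conifoldMonomial x q := by
  have hweight : conifoldWeight (conifoldExponent (p + q)) =
      conifoldWeight (conifoldExponent p + conifoldExponent q) := by
    rw [conifoldWeight_add, conifoldWeight_conifoldExponent hp, conifoldWeight_conifoldExponent hq,
      conifoldWeight_conifoldExponent (add_mem hp hq)]
  rw [conifoldMonomial, prod_pow_eq_of_conifoldWeight_eq hx hweight]
  simp only [Pi.add_apply, pow_add, Finset.prod_mul_distrib, conifoldMonomial]

theorem conifoldMonomial_conifoldGenerator (x : Fin 4 → M) (i : Fin 4) :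
    conifoldMonomial x (conifoldGenerator i) = x i := by
  fin_cases i <;> simp [conifoldMonomial, conifoldExponent, conifoldGenerator, Fin.prod_univ_four]

theorem map_conifoldMonomial {N F : Type*} [CommMonoid N] [FunLike F M N] [MonoidHomClass F M N]
    (f : F) (x : Fin 4 → M) (p : ℤ × ℤ × ℤ) :
    f (conifoldMonomial x p) = conifoldMonomial (f ∘ x) p := by
  simp [conifoldMonomial]

def conifoldHom {x : Fin 4 → M} (hx : x 0 * x 2 = x 1 * x 3) :
    Multiplicative conifoldCone →* M where
  toFun p := conifoldMonomial x p.toAdd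
  map_one' := conifoldMonomial_zero x
  map_mul' p q := conifoldMonomial_add hx p.toAdd.2 q.toAdd.2

end Monomial

theorem conifoldMonomial_ofAdd_conifoldGenerator (p : conifoldCone) :
    conifoldMonomial (fun i => Multiplicative.ofAdd (conifoldGenerator i)) p =
      Multiplicative.ofAdd p := by
  apply Multiplicative.toAdd.injective
  apply Subtype.ext
  simp only [conifoldMonomial, toAdd_prod, toAdd_pow, toAdd_ofAdd, AddSubmonoid.coe_finsetSum,
    AddSubmonoidClass.coe_nsmul]
  rw [← conifoldWeight_eq_sum, conifoldWeight_conifoldExponent p.2]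

theorem conifoldMonomial_single_conifoldGenerator {k : Type*} [CommSemiring k] (p : conifoldCone) :
    conifoldMonomial (fun i => single (conifoldGenerator i) (1 : k)) p = single p 1 := by
  have := congrArg (of k conifoldCone) (conifoldMonomial_ofAdd_conifoldGenerator p)
  rwa [map_conifoldMonomial, of_apply] at this

theorem AddMonoidAlgebra.surjective_of_forall_exists_eq_single_one {k G A : Type*} [CommSemiring k]
    [AddMonoid G] [Semiring A] [Algebra k A] {f : A →ₐ[k] AddMonoidAlgebra k G}
    (h : ∀ g, ∃ a, f a = single g 1) : Function.Surjective f := by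
  suffices ∀ y, y ∈ f.range from this
  intro y
  induction y using induction_linear with
  | zero => exact zero_mem _
  | add _ _ hy hy' => exact add_mem hy hy'
  | single g c => simpa using f.range.smul_mem (f.mem_range.2 (h g)) c

theorem AlgHom.ker_le_of_comp_eq_mkₐ {R A B : Type*} [CommSemiring R] [CommRing A] [Semiring B]
    [Algebra R A] [Algebra R B] {f : A →ₐ[R] B} {I : Ideal A} (g : B →ₐ[R] A ⧸ I)
    (hg : g.comp f = Ideal.Quotient.mkₐ R I) : RingHom.ker f ≤ I := by
  intro a ha
  rw [← Ideal.Quotient.eq_zero_iff_mem, ← Ideal.Quotient.mkₐ_eq_mk R, ← hg, AlgHom.comp_apply,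
    RingHom.mem_ker.mp ha, map_zero]

/-- For `S = {(m₁,m₂,h) ∈ ℤ³ : h ≥ max(m₁,0) + max(m₂,0)}`, the ℂ-algebra map
`ℂ[Z₁,Z₂,Z₃,Z₄] → ℂ[S]` with `Z₁ ↦ z^{(1,0,1)}`, `Z₂ ↦ z^{(0,1,1)}`, `Z₃ ↦ z^{(-1,0,0)}`,
`Z₄ ↦ z^{(0,-1,0)}` is surjective with kernel `(Z₁Z₃ - Z₂Z₄)`; hence
`ℂ[Z₁,Z₂,Z₃,Z₄]/(Z₁Z₃ - Z₂Z₄) ≅ ℂ[S]`. -/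
theorem stmt_11
    (S : AddSubmonoid (ℤ × ℤ × ℤ))
    (hS : ∀ p : ℤ × ℤ × ℤ, p ∈ S ↔ max p.1 0 + max p.2.1 0 ≤ p.2.2)
    (h₁ : ((1, 0, 1) : ℤ × ℤ × ℤ) ∈ S) (h₂ : ((0, 1, 1) : ℤ × ℤ × ℤ) ∈ S)
    (h₃ : ((-1, 0, 0) : ℤ × ℤ × ℤ) ∈ S) (h₄ : ((0, -1, 0) : ℤ × ℤ × ℤ) ∈ S)
    (ψ : MvPolynomial (Fin 4) ℂ →ₐ[ℂ] AddMonoidAlgebra ℂ S)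
    (hψ₁ : ψ (X 0) = AddMonoidAlgebra.single (⟨(1, 0, 1), h₁⟩ : S) 1)
    (hψ₂ : ψ (X 1) = AddMonoidAlgebra.single (⟨(0, 1, 1), h₂⟩ : S) 1)
    (hψ₃ : ψ (X 2) = AddMonoidAlgebra.single (⟨(-1, 0, 0), h₃⟩ : S) 1)
    (hψ₄ : ψ (X 3) = AddMonoidAlgebra.single (⟨(0, -1, 0), h₄⟩ : S) 1) :
    Function.Surjective ψ ∧
      RingHom.ker ψ = Ideal.span {(X 0 * X 2 - X 1 * X 3 : MvPolynomial (Fin 4) ℂ)} ∧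
      Nonempty ((MvPolynomial (Fin 4) ℂ ⧸
          Ideal.span {(X 0 * X 2 - X 1 * X 3 : MvPolynomial (Fin 4) ℂ)}) ≃ₐ[ℂ]
        AddMonoidAlgebra ℂ S) := by
  obtain rfl : S = conifoldCone := AddSubmonoid.ext hS
  have hψX : ψ ∘ X = fun i => single (conifoldGenerator i) 1 := by
    funext i
    fin_cases i
    exacts [hψ₁, hψ₂, hψ₃, hψ₄]
  have hsurj : Function.Surjective ψ := surjective_of_forall_exists_eq_single_one fun p =>
    ⟨conifoldMonomial X p, by
      rw [map_conifoldMonomial ψ, hψX, conifoldMonomial_single_conifoldGenerator]⟩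
  set I := Ideal.span {(X 0 * X 2 - X 1 * X 3 : MvPolynomial (Fin 4) ℂ)}
  have hrel : ψ (X 0 * X 2 - X 1 * X 3) = 0 := by
    rw [map_sub, map_mul, map_mul, hψ₁, hψ₂, hψ₃, hψ₄, single_mul_single, single_mul_single,
      sub_eq_zero]
    rfl
  have hmk : Ideal.Quotient.mk I (X 0) * Ideal.Quotient.mk I (X 2) =
      Ideal.Quotient.mk I (X 1) * Ideal.Quotient.mk I (X 3) := by
    rw [← map_mul, ← map_mul, Ideal.Quotient.eq]
    exact Ideal.subset_span rfl
  have hinv : (lift ℂ _ conifoldCone (conifoldHom (x := Ideal.Quotient.mkₐ ℂ I ∘ X) hmk)).comp ψ =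
      Ideal.Quotient.mkₐ ℂ I := by
    refine MvPolynomial.algHom_ext fun i => ?_
    rw [AlgHom.comp_apply, ← Function.comp_apply (f := ψ), hψX]
    simp [conifoldHom, conifoldMonomial_conifoldGenerator]
  have hker : RingHom.ker ψ = I :=
    le_antisymm (AlgHom.ker_le_of_comp_eq_mkₐ _ hinv)
      (Ideal.span_le.2 (Set.singleton_subset_iff.2 hrel))
  exact ⟨hsurj, hker, ⟨(Ideal.quotientEquivAlgOfEq ℂ hker.symm).trans
    (Ideal.quotientKerAlgEquivOfSurjective hsurj)⟩⟩
end

section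
/- Let Q = {(m₁,m₂,h,d) ∈ ℤ⁴ : |m₁| + |m₂| ≤ d and h ≥ max(m₁,0) + max(m₂,0)}, an additive submonoid of ℤ⁴. Then the ℂ-algebra homomorphism ℂ[X,Y,Z,W,U,T] → AddMonoidAlgebra ℂ Q determined by X ↦ z^{(1,0,1,1)}, Y ↦ z^{(−1,0,0,1)}, Z ↦ z^{(0,1,1,1)}, W ↦ z^{(0,−1,0,1)}, U ↦ z^{(0,0,0,1)}, T ↦ z^{(0,0,1,0)} is surjective with kernel the ideal generated by X·Y − T·U² and Z·W − T·U²; hence it induces a ℂ-algebra isomorphism ℂ[X,Y,Z,W,U,T]/(XY − TU², ZW − TU²) ≅ AddMonoidAlgebra ℂ Q. -/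
/-!
Write `vᵢ` for the six generators of `Q` in the statement, so that `ψ` is induced by the map
`a ↦ ∑ aᵢ vᵢ` on exponents. A point `(m₁, m₂, h, d)` of `Q` is the image of its normal form
`(m₁⁺, m₁⁻, m₂⁺, m₂⁻, d - |m₁| - |m₂|, h - m₁⁺ - m₂⁺)`, the unique preimage with
`a₀ a₁ = a₂ a₃ = 0`; this gives surjectivity. The kernel is spanned by the binomials
`z^a - z^b` with `a` and `b` of equal image, and the moves `XY ↦ TU²`, `ZW ↦ TU²` bring any
monomial to the normal form of its image while lowering its degree in `X, Y, Z, W`, so the two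
quadrics generate the kernel.
-/

open MvPolynomial

namespace AddMonoidAlgebra

variable {R M N : Type*}

theorem sub_mapDomain_mapDomain_mem [Ring R] [AddMonoid M] {f : M → N} {s : N → M}
    {I : Ideal R[M]} (hI : ∀ m, single m 1 - single (s (f m)) 1 ∈ I) (p : R[M]) :
    p - mapDomain s (mapDomain f p) ∈ I := by
  induction p using induction_linear with
  | zero => simp [mapDomain_zero]
  | add p q hp hq => simpa [mapDomain_add, add_sub_add_comm] using add_mem hp hq
  | single m r =>
    have h := I.mul_mem_left (single 0 r) (hI m)
    rwa [mul_sub, single_mul_single, single_mul_single, zero_add, zero_add, mul_one,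
      ← mapDomain_single, ← mapDomain_single] at h

theorem mapDomain_surjective [Semiring R] {f : M → N} {s : N → M}
    (hs : Function.RightInverse s f) :
    Function.Surjective (mapDomain (R := R) f) := fun p =>
  ⟨mapDomain s p, by
    induction p using induction_linear with
    | zero => simp [mapDomain_zero]
    | add p q hp hq => rw [mapDomain_add, mapDomain_add, hp, hq]
    | single n r => rw [mapDomain_single, mapDomain_single, hs n]⟩

theorem ker_mapDomainAlgHom_eq [CommRing R] [AddMonoid M] [AddMonoid N] {f : M →+ N}
    (s : N → M) {I : Ideal R[M]} (hI : I ≤ RingHom.ker (mapDomainAlgHom R R f))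
    (hs : ∀ m, single m 1 - single (s (f m)) 1 ∈ I) :
    RingHom.ker (mapDomainAlgHom R R f) = I := by
  refine le_antisymm (fun p hp => ?_) hI
  have hp0 : mapDomain f p = 0 := hp
  simpa [hp0, mapDomain_zero] using sub_mapDomain_mapDomain_mem hs p

theorem mapDomainAlgHom_single_sub_single [CommRing R] [AddMonoid M] [AddMonoid N] {f : M →+ N}
    {m m' : M} (h : f m = f m') :
    mapDomainAlgHom R R f (single m 1 - single m' 1) = 0 := by
  simp [map_sub, h]

end AddMonoidAlgebra

namespace MvPolynomial

variable {σ R M : Type*} [CommRing R] [AddCommMonoid M]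

theorem algHom_eq_mapDomainAlgHom_linearCombination {v : σ → M}
    (ψ : MvPolynomial σ R →ₐ[R] AddMonoidAlgebra R M)
    (hψ : ∀ i, ψ (X i) = AddMonoidAlgebra.single (v i) 1) :
    ψ = AddMonoidAlgebra.mapDomainAlgHom R R
      (Finsupp.linearCombination ℕ v).toAddMonoidHom := by
  refine algHom_ext fun i => ?_
  rw [hψ, X, ← single_eq_monomial]
  simp

theorem monomial_sub_monomial_add_mem {I : Ideal (MvPolynomial σ R)} {a b c : σ →₀ ℕ}
    (hb : b ≤ a) (h : monomial b (1 : R) - monomial c 1 ∈ I) :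
    monomial a (1 : R) - monomial (a - b + c) 1 ∈ I := by
  have := I.mul_mem_left (monomial (a - b) 1) h
  rwa [mul_sub, monomial_mul, monomial_mul, one_mul, tsub_add_cancel_of_le hb] at this

theorem X_mul_X_sub_X_mul_X_sq (i j k l : σ) :
    (X i * X j - X k * X l ^ 2 : MvPolynomial σ R) =
      monomial (Finsupp.single i 1 + Finsupp.single j 1) 1 -
        monomial (Finsupp.single k 1 + Finsupp.single l 2) 1 := by
  simp [X, monomial_pow, monomial_mul]

end MvPolynomial

namespace FourPlaneDegeneration

open Finsupp (linearCombination)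

variable (R : Type*) [CommRing R]

noncomputable def quadricsIdeal : Ideal (MvPolynomial (Fin 6) R) :=
  Ideal.span {X 0 * X 1 - X 5 * X 4 ^ 2, X 2 * X 3 - X 5 * X 4 ^ 2}

variable {R} (Q : AddSubmonoid (ℤ × ℤ × ℤ × ℤ))
  (hQ : ∀ p : ℤ × ℤ × ℤ × ℤ, p ∈ Q ↔
    |p.1| + |p.2.1| ≤ p.2.2.2 ∧ max p.1 0 + max p.2.1 0 ≤ p.2.2.1)

def generator : Fin 6 → Q :=
  ![⟨(1, 0, 1, 1), (hQ _).2 (by norm_num)⟩, ⟨(-1, 0, 0, 1), (hQ _).2 (by norm_num)⟩,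
    ⟨(0, 1, 1, 1), (hQ _).2 (by norm_num)⟩, ⟨(0, -1, 0, 1), (hQ _).2 (by norm_num)⟩,
    ⟨(0, 0, 0, 1), (hQ _).2 (by norm_num)⟩, ⟨(0, 0, 1, 0), (hQ _).2 (by norm_num)⟩]

theorem coe_linearCombination_generator (a : Fin 6 →₀ ℕ) :
    ((linearCombination ℕ (generator Q hQ) a : Q) : ℤ × ℤ × ℤ × ℤ) =
      ((a 0 : ℤ) - a 1, (a 2 : ℤ) - a 3, (a 0 : ℤ) + a 2 + a 5,
        (a 0 : ℤ) + a 1 + a 2 + a 3 + a 4) := by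
  simp [Finsupp.linearCombination_apply, Finsupp.sum_fintype, Fin.sum_univ_six, generator,
    sub_eq_add_neg]

noncomputable def normalForm (q : ℤ × ℤ × ℤ × ℤ) : Fin 6 →₀ ℕ :=
  Finsupp.equivFunOnFinite.symm
    ![q.1.toNat, (-q.1).toNat, q.2.1.toNat, (-q.2.1).toNat,
      (q.2.2.2 - |q.1| - |q.2.1|).toNat, (q.2.2.1 - max q.1 0 - max q.2.1 0).toNat]

theorem linearCombination_generator_normalForm (q : Q) :
    linearCombination ℕ (generator Q hQ) (normalForm q) = q := by
  obtain ⟨⟨m₁, m₂, h, d⟩, hq⟩ := q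
  apply Subtype.ext
  simp only [hQ, abs_eq_max_neg] at hq
  simp only [normalForm, abs_eq_max_neg, coe_linearCombination_generator, Fin.isValue,
    Finsupp.equivFunOnFinite_symm_apply_apply, Matrix.cons_val_zero, Matrix.cons_val_one,
    Matrix.cons_val, Int.ofNat_toNat, max_zero_sub_max_neg_zero_eq_self,
    max_zero_add_max_neg_zero_eq_abs_self, Prod.mk.injEq, true_and]
  omega

theorem normalForm_linearCombination_generator {a : Fin 6 →₀ ℕ}
    (ha : (a 0 = 0 ∨ a 1 = 0) ∧ (a 2 = 0 ∨ a 3 = 0)) :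
    normalForm (linearCombination ℕ (generator Q hQ) a) = a := by
  ext i
  fin_cases i <;> simp [coe_linearCombination_generator, normalForm, abs_eq_max_neg] <;> omega

noncomputable def quadricExponents : Set (Fin 6 →₀ ℕ) :=
  {.single 0 1 + .single 1 1, .single 2 1 + .single 3 1}

noncomputable def tuSqExponent : Fin 6 →₀ ℕ := .single 5 1 + .single 4 2

variable {Q hQ}

theorem linearCombination_generator_eq_of_mem_quadricExponents {b : Fin 6 →₀ ℕ}
    (hb : b ∈ quadricExponents) :
    linearCombination ℕ (generator Q hQ) b =
      linearCombination ℕ (generator Q hQ) tuSqExponent := by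
  apply Subtype.ext
  rw [coe_linearCombination_generator, coe_linearCombination_generator]
  rcases hb with rfl | rfl <;> simp [tuSqExponent]

theorem monomial_sub_monomial_tuSqExponent_mem_quadricsIdeal {b : Fin 6 →₀ ℕ}
    (hb : b ∈ quadricExponents) :
    monomial b (1 : R) - monomial tuSqExponent 1 ∈ quadricsIdeal R := by
  apply Ideal.subset_span
  rcases hb with rfl | rfl <;> simp [X_mul_X_sub_X_mul_X_sq, tuSqExponent]

theorem monomial_sub_monomial_normalForm_mem_of_le {a b : Fin 6 →₀ ℕ}
    (hb : b ∈ quadricExponents) (hba : b ≤ a)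
    (h : monomial (a - b + tuSqExponent) (1 : R) -
      monomial (normalForm (linearCombination ℕ (generator Q hQ) (a - b + tuSqExponent))) 1 ∈
        quadricsIdeal R) :
    monomial a (1 : R) - monomial (normalForm (linearCombination ℕ (generator Q hQ) a)) 1 ∈
      quadricsIdeal R := by
  have he : linearCombination ℕ (generator Q hQ) (a - b + tuSqExponent) =
      linearCombination ℕ (generator Q hQ) a := by
    rw [map_add, ← linearCombination_generator_eq_of_mem_quadricExponents hb, ← map_add,
      tsub_add_cancel_of_le hba]
  rw [he] at h
  simpa using add_mem (monomial_sub_monomial_add_mem hba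
    (monomial_sub_monomial_tuSqExponent_mem_quadricsIdeal hb)) h

theorem monomial_sub_monomial_normalForm_mem (a : Fin 6 →₀ ℕ) :
    monomial a (1 : R) - monomial (normalForm (linearCombination ℕ (generator Q hQ) a)) 1 ∈
      quadricsIdeal R := by
  by_cases h01 : 0 < a 0 ∧ 0 < a 1
  · refine monomial_sub_monomial_normalForm_mem_of_le (.inl rfl) ?_
      (monomial_sub_monomial_normalForm_mem _)
    intro i; fin_cases i <;> simp <;> omega
  by_cases h23 : 0 < a 2 ∧ 0 < a 3
  · refine monomial_sub_monomial_normalForm_mem_of_le (.inr rfl) ?_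
      (monomial_sub_monomial_normalForm_mem _)
    intro i; fin_cases i <;> simp <;> omega
  rw [normalForm_linearCombination_generator Q hQ (by omega), sub_self]
  exact zero_mem _
termination_by a 0 + a 1 + a 2 + a 3
decreasing_by all_goals simp [tuSqExponent]; omega

variable (R Q hQ)

theorem quadricsIdeal_le_ker :
    quadricsIdeal R ≤ RingHom.ker (AddMonoidAlgebra.mapDomainAlgHom R R
      (linearCombination ℕ (generator Q hQ)).toAddMonoidHom) := by
  rw [quadricsIdeal, Ideal.span_le]
  rintro _ (rfl | rfl) <;>
  · rw [SetLike.mem_coe, RingHom.mem_ker, X_mul_X_sub_X_mul_X_sq, ← single_eq_monomial,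
      ← single_eq_monomial]
    exact AddMonoidAlgebra.mapDomainAlgHom_single_sub_single
      (linearCombination_generator_eq_of_mem_quadricExponents (by simp [quadricExponents]))

theorem ker_mapDomainAlgHom_linearCombination_generator :
    RingHom.ker (AddMonoidAlgebra.mapDomainAlgHom R R
      (linearCombination ℕ (generator Q hQ)).toAddMonoidHom) = quadricsIdeal R := by
  refine AddMonoidAlgebra.ker_mapDomainAlgHom_eq (M := Fin 6 →₀ ℕ) (N := Q)
    (fun q => normalForm q) (quadricsIdeal_le_ker R Q hQ) fun a => ?_
  rw [single_eq_monomial, single_eq_monomial]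
  exact monomial_sub_monomial_normalForm_mem a

theorem mapDomain_linearCombination_generator_surjective :
    Function.Surjective (AddMonoidAlgebra.mapDomain (R := R)
      (linearCombination ℕ (generator Q hQ))) :=
  AddMonoidAlgebra.mapDomain_surjective (s := fun q => normalForm q)
    (linearCombination_generator_normalForm Q hQ)

end FourPlaneDegeneration

/-- For `Q = {(m₁,m₂,h,d) ∈ ℤ⁴ : |m₁|+|m₂| ≤ d, h ≥ max(m₁,0)+max(m₂,0)}`, the
ℂ-algebra map `ℂ[X,Y,Z,W,U,T] → ℂ[Q]` with `X ↦ z^{(1,0,1,1)}`, `Y ↦ z^{(-1,0,0,1)}`,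
`Z ↦ z^{(0,1,1,1)}`, `W ↦ z^{(0,-1,0,1)}`, `U ↦ z^{(0,0,0,1)}`, `T ↦ z^{(0,0,1,0)}` is
surjective with kernel `(XY - TU², ZW - TU²)`; hence
`ℂ[X,Y,Z,W,U,T]/(XY - TU², ZW - TU²) ≅ ℂ[Q]`. -/
theorem stmt_14
    (Q : AddSubmonoid (ℤ × ℤ × ℤ × ℤ))
    (hQ : ∀ p : ℤ × ℤ × ℤ × ℤ, p ∈ Q ↔
      |p.1| + |p.2.1| ≤ p.2.2.2 ∧ max p.1 0 + max p.2.1 0 ≤ p.2.2.1)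
    (h₁ : ((1, 0, 1, 1) : ℤ × ℤ × ℤ × ℤ) ∈ Q) (h₂ : ((-1, 0, 0, 1) : ℤ × ℤ × ℤ × ℤ) ∈ Q)
    (h₃ : ((0, 1, 1, 1) : ℤ × ℤ × ℤ × ℤ) ∈ Q) (h₄ : ((0, -1, 0, 1) : ℤ × ℤ × ℤ × ℤ) ∈ Q)
    (h₅ : ((0, 0, 0, 1) : ℤ × ℤ × ℤ × ℤ) ∈ Q) (h₆ : ((0, 0, 1, 0) : ℤ × ℤ × ℤ × ℤ) ∈ Q)
    (ψ : MvPolynomial (Fin 6) ℂ →ₐ[ℂ] AddMonoidAlgebra ℂ Q)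
    (hψ₁ : ψ (X 0) = AddMonoidAlgebra.single (⟨(1, 0, 1, 1), h₁⟩ : Q) 1)
    (hψ₂ : ψ (X 1) = AddMonoidAlgebra.single (⟨(-1, 0, 0, 1), h₂⟩ : Q) 1)
    (hψ₃ : ψ (X 2) = AddMonoidAlgebra.single (⟨(0, 1, 1, 1), h₃⟩ : Q) 1)
    (hψ₄ : ψ (X 3) = AddMonoidAlgebra.single (⟨(0, -1, 0, 1), h₄⟩ : Q) 1)
    (hψ₅ : ψ (X 4) = AddMonoidAlgebra.single (⟨(0, 0, 0, 1), h₅⟩ : Q) 1)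
    (hψ₆ : ψ (X 5) = AddMonoidAlgebra.single (⟨(0, 0, 1, 0), h₆⟩ : Q) 1) :
    Function.Surjective ψ ∧
      RingHom.ker ψ = Ideal.span
        {(X 0 * X 1 - X 5 * X 4 ^ 2 : MvPolynomial (Fin 6) ℂ),
         (X 2 * X 3 - X 5 * X 4 ^ 2 : MvPolynomial (Fin 6) ℂ)} ∧
      Nonempty ((MvPolynomial (Fin 6) ℂ ⧸ Ideal.span
          {(X 0 * X 1 - X 5 * X 4 ^ 2 : MvPolynomial (Fin 6) ℂ),
           (X 2 * X 3 - X 5 * X 4 ^ 2 : MvPolynomial (Fin 6) ℂ)}) ≃ₐ[ℂ]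
        AddMonoidAlgebra ℂ Q) := by
  obtain rfl : ψ = AddMonoidAlgebra.mapDomainAlgHom ℂ ℂ
      (Finsupp.linearCombination ℕ (FourPlaneDegeneration.generator Q hQ)).toAddMonoidHom :=
    algHom_eq_mapDomainAlgHom_linearCombination ψ fun i => by
      fin_cases i
      exacts [hψ₁, hψ₂, hψ₃, hψ₄, hψ₅, hψ₆]
  have hsurj :=
    FourPlaneDegeneration.mapDomain_linearCombination_generator_surjective ℂ Q hQ
  have hker := FourPlaneDegeneration.ker_mapDomainAlgHom_linearCombination_generator ℂ Q hQ
  exact ⟨hsurj, hker, ⟨(Ideal.quotientEquivAlgOfEq ℂ hker.symm).trans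
    (Ideal.quotientKerAlgEquivOfSurjective hsurj)⟩⟩
end

section
/- Let K = ℂ(x,y,z,w) be the field of rational functions in four variables over ℂ. Suppose θ_A, θ_B, θ_C, θ_D : K → K are ℂ-algebra homomorphisms satisfying: θ_A(x) = (1+w)·x, θ_A(y) = (1+w)^{−1}·y, θ_A(z) = z, θ_A(w) = w; θ_B(x) = x, θ_B(y) = y, θ_B(z) = (1+y)·z, θ_B(w) = (1+y)^{−1}·w; θ_C(x) = (1+w)^{−1}·x, θ_C(y) = (1+w)·y, θ_C(z) = z, θ_C(w) = w; θ_D(x) = x, θ_D(y) = y, θ_D(z) = (1+y)^{−1}·z, θ_D(w) = (1+y)·w. Then the composite θ = θ_D ∘ θ_C ∘ θ_B ∘ θ_A satisfies θ(x) = (1 + w·y)^{−1}·x, θ(y) = (1 + w·y)·y, θ(z) = (1 + w·y)·z, and θ(w) = (1 + w·y)^{−1}·w. -/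
/-!
Push `x, y, z, w` through the four automorphisms in turn: every factor that appears is an image
of a gluing function `1 + y` or `1 + w`. The composite collapses because of the one identity
`θ_D (θ_C (1 + y)) = 1 + (1 + (1 + y) w) y = (1 + y) (1 + w y)`: transported around the vertex,
the gluing function of the first wall picks up the factor `1 + w y` of the new ray. The
denominators are nonzero in `ℂ(x,y,z,w)` because they are polynomials with constant term `1`.
-/

open MvPolynomial

theorem MvPolynomial.algebraMap_ne_zero_of_constantCoeff_ne_zero {σ R K : Type*} [CommRing R]
    [CommRing K] [Algebra (MvPolynomial σ R) K] [IsFractionRing (MvPolynomial σ R) K]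
    {p : MvPolynomial σ R} (hp : constantCoeff p ≠ 0) : algebraMap (MvPolynomial σ R) K p ≠ 0 :=
  (map_ne_zero_iff _ (IsFractionRing.injective _ K)).mpr fun h ↦ hp (by rw [h, map_zero])

theorem wallCrossing_comp_apply {K F : Type*} [Field K] [FunLike F K K] [RingHomClass F K K]
    (x y z w : K) (θA θB θC θD : F)
    (hAx : θA x = (1 + w) * x) (hAy : θA y = (1 + w)⁻¹ * y)
    (hAz : θA z = z) (hAw : θA w = w)
    (hBx : θB x = x) (hBy : θB y = y)
    (hBz : θB z = (1 + y) * z) (hBw : θB w = (1 + y)⁻¹ * w)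
    (hCx : θC x = (1 + w)⁻¹ * x) (hCy : θC y = (1 + w) * y)
    (hCz : θC z = z) (hCw : θC w = w)
    (hDx : θD x = x) (hDy : θD y = y)
    (hDz : θD z = (1 + y)⁻¹ * z) (hDw : θD w = (1 + y) * w)
    (hy : 1 + y ≠ 0) (hwy : 1 + w * y ≠ 0) (hyw : 1 + (1 + y) * w ≠ 0) :
    θD (θC (θB (θA x))) = (1 + w * y)⁻¹ * x ∧
    θD (θC (θB (θA y))) = (1 + w * y) * y ∧
    θD (θC (θB (θA z))) = (1 + w * y) * z ∧
    θD (θC (θB (θA w))) = (1 + w * y)⁻¹ * w := by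
  have scatter : θD (θC (1 + y)) = (1 + y) * (1 + w * y) := by
    simp only [map_add, map_one, map_mul, hCy, hDy, hDw]
    ring
  have hDCBw : θD (θC (θB w)) = (1 + w * y)⁻¹ * w := by
    rw [hBw, map_mul, map_mul, map_inv₀, map_inv₀, scatter, hCw, hDw]
    field_simp
  have hDCBx : θD (θC (θB x)) = (1 + (1 + y) * w)⁻¹ * x := by
    simp only [hBx, hCx, map_mul, map_inv₀, map_add, map_one, hDw, hDx]
  have hDCBy : θD (θC (θB y)) = (1 + (1 + y) * w) * y := by
    simp only [hBy, hCy, map_mul, map_add, map_one, hDw, hDy]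
  have hDCBz : θD (θC (θB z)) = (1 + w * y) * z := by
    rw [hBz, map_mul, map_mul, scatter, hCz, hDz]
    field_simp
  have hDCB_one_add_w : θD (θC (θB (1 + w))) = (1 + (1 + y) * w) / (1 + w * y) := by
    rw [map_add, map_add, map_add, map_one, map_one, map_one, hDCBw]
    field_simp
    ring
  refine ⟨?_, ?_, ?_, ?_⟩
  · rw [hAx, map_mul, map_mul, map_mul, hDCBx, hDCB_one_add_w]
    field_simp
  · rw [hAy, map_mul, map_mul, map_mul, hDCBy, map_inv₀, map_inv₀, map_inv₀, hDCB_one_add_w]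
    field_simp
  · rw [hAz, hDCBz]
  · rw [hAw, hDCBw]

theorem stmt_16_general (K : Type) [Field K] [Algebra ℂ K]
    [Algebra (MvPolynomial (Fin 4) ℂ) K]
    [IsFractionRing (MvPolynomial (Fin 4) ℂ) K]
    (x y z w : K)
    (hy : y = algebraMap (MvPolynomial (Fin 4) ℂ) K (X 1))
    (hw : w = algebraMap (MvPolynomial (Fin 4) ℂ) K (X 3))
    (θA θB θC θD : K →ₐ[ℂ] K)
    (hAx : θA x = (1 + w) * x) (hAy : θA y = (1 + w)⁻¹ * y)
    (hAz : θA z = z) (hAw : θA w = w)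
    (hBx : θB x = x) (hBy : θB y = y)
    (hBz : θB z = (1 + y) * z) (hBw : θB w = (1 + y)⁻¹ * w)
    (hCx : θC x = (1 + w)⁻¹ * x) (hCy : θC y = (1 + w) * y)
    (hCz : θC z = z) (hCw : θC w = w)
    (hDx : θD x = x) (hDy : θD y = y)
    (hDz : θD z = (1 + y)⁻¹ * z) (hDw : θD w = (1 + y) * w) :
    (θD.comp (θC.comp (θB.comp θA))) x = (1 + w * y)⁻¹ * x ∧
    (θD.comp (θC.comp (θB.comp θA))) y = (1 + w * y) * y ∧
    (θD.comp (θC.comp (θB.comp θA))) z = (1 + w * y) * z ∧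
    (θD.comp (θC.comp (θB.comp θA))) w = (1 + w * y)⁻¹ * w := by
  have ne_zero (p : MvPolynomial (Fin 4) ℂ) (hp : constantCoeff p ≠ 0) :
      algebraMap (MvPolynomial (Fin 4) ℂ) K p ≠ 0 :=
    algebraMap_ne_zero_of_constantCoeff_ne_zero hp
  have hy₀ : 1 + y ≠ 0 := by
    have h := ne_zero (1 + X 1) (by simp)
    rwa [map_add, map_one, ← hy] at h
  have hwy₀ : 1 + w * y ≠ 0 := by
    have h := ne_zero (1 + X 3 * X 1) (by simp)
    rwa [map_add, map_one, map_mul, ← hy, ← hw] at h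
  have hyw₀ : 1 + (1 + y) * w ≠ 0 := by
    have h := ne_zero (1 + (1 + X 1) * X 3) (by simp)
    rwa [map_add, map_one, map_mul, map_add, map_one, ← hy, ← hw] at h
  simpa only [AlgHom.comp_apply] using wallCrossing_comp_apply x y z w θA θB θC θD hAx hAy hAz hAw
    hBx hBy hBz hBw hCx hCy hCz hCw hDx hDy hDz hDw hy₀ hwy₀ hyw₀

/-- In `K = ℂ(x,y,z,w)`, the composite of the four wall-crossing ℂ-algebra
homomorphisms `θ_A, θ_B, θ_C, θ_D` (with the prescribed values on `x,y,z,w`) acts by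
`x ↦ (1+wy)⁻¹x`, `y ↦ (1+wy)y`, `z ↦ (1+wy)z`, `w ↦ (1+wy)⁻¹w`. -/
theorem stmt_16 (K : Type) [Field K] [Algebra ℂ K]
    [Algebra (MvPolynomial (Fin 4) ℂ) K]
    [IsScalarTower ℂ (MvPolynomial (Fin 4) ℂ) K]
    [IsFractionRing (MvPolynomial (Fin 4) ℂ) K]
    (x y z w : K)
    (hx : x = algebraMap (MvPolynomial (Fin 4) ℂ) K (X 0))
    (hy : y = algebraMap (MvPolynomial (Fin 4) ℂ) K (X 1))
    (hz : z = algebraMap (MvPolynomial (Fin 4) ℂ) K (X 2))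
    (hw : w = algebraMap (MvPolynomial (Fin 4) ℂ) K (X 3))
    (θA θB θC θD : K →ₐ[ℂ] K)
    (hAx : θA x = (1 + w) * x) (hAy : θA y = (1 + w)⁻¹ * y)
    (hAz : θA z = z) (hAw : θA w = w)
    (hBx : θB x = x) (hBy : θB y = y)
    (hBz : θB z = (1 + y) * z) (hBw : θB w = (1 + y)⁻¹ * w)
    (hCx : θC x = (1 + w)⁻¹ * x) (hCy : θC y = (1 + w) * y)
    (hCz : θC z = z) (hCw : θC w = w)
    (hDx : θD x = x) (hDy : θD y = y)
    (hDz : θD z = (1 + y)⁻¹ * z) (hDw : θD w = (1 + y) * w) :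
    (θD.comp (θC.comp (θB.comp θA))) x = (1 + w * y)⁻¹ * x ∧
    (θD.comp (θC.comp (θB.comp θA))) y = (1 + w * y) * y ∧
    (θD.comp (θC.comp (θB.comp θA))) z = (1 + w * y) * z ∧
    (θD.comp (θC.comp (θB.comp θA))) w = (1 + w * y)⁻¹ * w :=
  stmt_16_general K x y z w hy hw θA θB θC θD hAx hAy hAz hAw hBx hBy hBz hBw hCx hCy hCz hCw hDx
    hDy hDz hDw
end
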